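/- arXiv:0710.3997 — 4 statements merged into one kernel-verified Lean document; each statement's English description precedes it below -/
import Mathlib

section
/- Any two non-trivial orientation preserving involutions of the circle are conjugate in the group of orientation preserving homeomorphisms of the circle. -/
noncomputable section

open scoped Classical

local instance : Fact ((0:ℝ) < 1) := ⟨zero_lt_one⟩

/-- The circle `S¹`, realised as `ℝ / ℤ`. -/
abbrev S1 := AddCircle (1 : ℝ)

/-- `F` is a (monotone, degree one) lift of the circle homeomorphism `f`. -/
def IsLiftOf (f : S1 ≃ₜ S1) (F : CircleDeg1Lift) : Prop :=
  ∀ x : ℝ, f (x : S1) = ((F x : ℝ) : S1)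

/-- A circle homeomorphism is orientation preserving iff it admits a monotone degree one lift. -/
def OrientationPreserving (f : S1 ≃ₜ S1) : Prop :=
  ∃ F : CircleDeg1Lift, IsLiftOf f F

/-- A circle homeomorphism is orientation reversing iff it admits a strictly decreasing
degree `-1` lift. -/
def OrientationReversing (f : S1 ≃ₜ S1) : Prop :=
  ∃ F : ℝ → ℝ, StrictAnti F ∧ (∀ x : ℝ, F (x + 1) = F x - 1) ∧
    ∀ x : ℝ, f (x : S1) = ((F x : ℝ) : S1)

/-- `f` has (Poincaré) rotation number `r` (mod 1): some lift has translation number `r`. -/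
def HasRotationNumber (f : S1 ≃ₜ S1) (r : ℝ) : Prop :=
  ∃ F : CircleDeg1Lift, IsLiftOf f F ∧ F.translationNumber = r

/-- An involution. -/
def IsInvolution (f : S1 ≃ₜ S1) : Prop := ∀ x, f (f x) = x

/-- The canonical representative of a point of the circle in `[0, 1)`. -/
def rep (x : S1) : ℝ := (AddCircle.equivIco 1 0 x : ℝ)

/-- The signature of a circle homeomorphism with respect to a lift `F`; when `F` is the
(unique) lift with a fixed point of an orientation preserving homeomorphism with a fixed
point, this is the signature function `Δ_f : S¹ → {-1, 0, 1}`. -/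
def signature (F : CircleDeg1Lift) (x : S1) : ℝ := Real.sign (F (rep x) - rep x)

/-- Strong reversibility in `Homeo⁺(S¹)`. -/
def StronglyReversiblePlus (f : S1 ≃ₜ S1) : Prop :=
  ∃ σ : S1 ≃ₜ S1, OrientationPreserving σ ∧ IsInvolution σ ∧ ∀ x, σ (f (σ x)) = f.symm x

/-- Strong reversibility in the full group `Homeo(S¹)`. -/
def StronglyReversible (f : S1 ≃ₜ S1) : Prop :=
  ∃ τ : S1 ≃ₜ S1, IsInvolution τ ∧ ∀ x, τ (f (τ x)) = f.symm x

/- ### auxiliary lemmas -/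


lemma shift_int {M : ℝ → ℝ} (hM : ∀ x, M (x+1) = M x + 1) :
    ∀ (n : ℤ) (x : ℝ), M (x + n) = M x + n := by
  intro n
  induction n using Int.induction_on with
  | zero => simp
  | succ k ih =>
      intro x
      have h1 : M ((x + k) + 1) = M (x + k) + 1 := hM _
      have h2 : M (x + k) = M x + k := ih x
      push_cast
      rw [← add_assoc, h1, h2, add_assoc]
  | pred k ih =>
      intro x
      have h1 : M ((x + (-(k:ℝ) - 1)) + 1) = M (x + (-(k:ℝ) - 1)) + 1 := hM _
      have h2 : x + (-(k:ℝ) - 1) + 1 = x + -(k:ℝ) := by ring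
      have h3 : M (x + -(k:ℝ)) = M x + -(k:ℝ) := by
        have := ih x; push_cast at this; linarith [this]
      rw [h2, h3] at h1
      push_cast
      linarith [h1]

lemma symm_shift (M : ℝ ≃o ℝ) (hM : ∀ x, M (x+1) = M x + 1) :
    ∀ x, M.symm (x+1) = M.symm x + 1 := by
  intro x
  apply M.injective
  rw [hM, M.apply_symm_apply, M.apply_symm_apply]

lemma coe_add_int (y : ℝ) (m : ℤ) : ((y + m : ℝ) : S1) = (y : S1) := by
  rw [QuotientAddGroup.eq]
  exact AddSubgroup.mem_zmultiples_iff.mpr ⟨-m, by push_cast [zsmul_eq_mul]; ring⟩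

lemma descend_rel {M : ℝ → ℝ} (hM : ∀ x, M (x+1) = M x + 1) :
    Relator.LiftFun (QuotientAddGroup.leftRel (AddSubgroup.zmultiples (1:ℝ)))
      (QuotientAddGroup.leftRel (AddSubgroup.zmultiples (1:ℝ))) M M := by
  intro a b h
  rw [QuotientAddGroup.leftRel_apply] at h ⊢
  obtain ⟨n, hn⟩ := AddSubgroup.mem_zmultiples_iff.mp h
  simp only [zsmul_eq_mul, mul_one] at hn
  refine AddSubgroup.mem_zmultiples_iff.mpr ⟨n, ?_⟩
  have hb : b = a + n := by linarith
  simp only [zsmul_eq_mul, mul_one]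
  rw [hb, shift_int hM]
  ring

def toS1Map (M : ℝ → ℝ) (hM : ∀ x, M (x+1) = M x + 1) : S1 → S1 :=
  Quotient.map' M (descend_rel hM)

lemma toS1Map_coe (M : ℝ → ℝ) (hM : ∀ x, M (x+1) = M x + 1) (x : ℝ) :
    toS1Map M hM (x : S1) = ((M x : ℝ) : S1) := rfl

def mkHomeo (M : ℝ ≃o ℝ) (hM : ∀ x, M (x+1) = M x + 1) : S1 ≃ₜ S1 where
  toFun := toS1Map M hM
  invFun := toS1Map M.symm (symm_shift M hM)
  left_inv := by
    intro x
    induction x using QuotientAddGroup.induction_on with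
    | H y => rw [toS1Map_coe, toS1Map_coe, M.symm_apply_apply]
  right_inv := by
    intro x
    induction x using QuotientAddGroup.induction_on with
    | H y => rw [toS1Map_coe, toS1Map_coe, M.apply_symm_apply]
  continuous_toFun :=
    Continuous.quotient_map' (show Continuous (⇑M) from M.toHomeomorph.continuous)
      (descend_rel hM)
  continuous_invFun :=
    Continuous.quotient_map' (show Continuous (⇑M.symm) from M.toHomeomorph.symm.continuous)
      (descend_rel (symm_shift M hM))

lemma mkHomeo_coe (M : ℝ ≃o ℝ) (hM : ∀ x, M (x+1) = M x + 1) (x : ℝ) :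
    mkHomeo M hM (x : S1) = ((M x : ℝ) : S1) := rfl

lemma mkHomeo_symm_coe (M : ℝ ≃o ℝ) (hM : ∀ x, M (x+1) = M x + 1) (x : ℝ) :
    (mkHomeo M hM).symm (x : S1) = ((M.symm x : ℝ) : S1) := rfl

/- ### Step 1 : a good lift with `G (G x) = x + 1` -/

lemma exists_good_lift (σ : S1 ≃ₜ S1) (h : OrientationPreserving σ) (hi : IsInvolution σ)
    (hn : ∃ x, σ x ≠ x) :
    ∃ G : ℝ → ℝ, Monotone G ∧ (∀ x, G (x+1) = G x + 1) ∧ (∀ x, G (G x) = x + 1) ∧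
      ∀ x : ℝ, σ (x : S1) = ((G x : ℝ) : S1) := by
  obtain ⟨F, hF⟩ := h
  have hInt : ∀ x : ℝ, ∃ n : ℤ, F (F x) = x + n := by
    intro x
    have h1 : ((F (F x) : ℝ) : S1) = ((x : ℝ) : S1) := by
      rw [← hF (F x), ← hF x]; exact hi _
    rw [QuotientAddGroup.eq] at h1
    obtain ⟨n, hn'⟩ := AddSubgroup.mem_zmultiples_iff.mp h1
    simp only [zsmul_eq_mul, mul_one] at hn'
    exact ⟨-n, by push_cast; linarith⟩
  obtain ⟨n₀, hn₀⟩ := hInt 0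
  have hF1 : ∀ x : ℝ, F (x + 1) = F x + 1 := fun x => F.map_add_one x
  have hconst : ∀ x : ℝ, F (F x) = x + n₀ := by
    have hIco : ∀ x : ℝ, 0 ≤ x → x < 1 → F (F x) = x + n₀ := by
      intro x hx0 hx1
      rcases eq_or_lt_of_le hx0 with rfl | hx0'
      · simpa using hn₀
      obtain ⟨n, hn'⟩ := hInt x
      have hlow : F (F 0) ≤ F (F x) := F.mono (F.mono hx0)
      have hup : F (F x) ≤ F (F 0) + 1 := by
        have ha : F (F x) ≤ F (F 1) := F.mono (F.mono hx1.le)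
        have hb : F (F 1) = F (F 0) + 1 := by
          have : F (F (0 + 1)) = F (F 0) + 1 := by rw [hF1, hF1]
          norm_num at this
          linarith [this]
        linarith
      rw [hn', hn₀] at hlow hup
      have hge : (n₀ : ℝ) - 1 < n := by linarith
      have hlt : (n : ℝ) < n₀ + 1 := by linarith
      have hge' : n₀ ≤ n := by
        have : n₀ - 1 < n := by exact_mod_cast hge
        omega
      have hle' : n ≤ n₀ := by
        have : n < n₀ + 1 := by exact_mod_cast hlt
        omega
      rw [hn', le_antisymm hle' hge']
    intro x
    have hx := hIco (Int.fract x) (Int.fract_nonneg x) (Int.fract_lt_one x)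
    have hxsplit : x = Int.fract x + (⌊x⌋ : ℝ) := by
      rw [add_comm]; exact (Int.floor_add_fract x).symm
    calc F (F x) = F (F (Int.fract x + (⌊x⌋:ℝ))) := by rw [← hxsplit]
      _ = F (F (Int.fract x) + (⌊x⌋:ℝ)) := by rw [F.map_add_int]
      _ = F (F (Int.fract x)) + (⌊x⌋:ℝ) := by rw [F.map_add_int]
      _ = Int.fract x + (n₀:ℝ) + (⌊x⌋:ℝ) := by rw [hx]
      _ = x + n₀ := by linarith [hxsplit]
  rcases Int.even_or_odd n₀ with ⟨m, hm⟩ | ⟨m, hm⟩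
  · -- even : contradiction with non-triviality
    exfalso
    have hmr : (n₀ : ℝ) = m + m := by exact_mod_cast hm
    have hFx : ∀ x : ℝ, F x = x + m := by
      intro x
      by_contra hne
      rcases lt_or_gt_of_ne hne with hlt | hgt
      · have h1 : F x - (m:ℝ) ≤ x := by linarith
        have h2 : F (F x - (m:ℝ)) ≤ F x := F.mono h1
        rw [F.map_sub_int, hconst] at h2
        linarith
      · have h1 : x ≤ F x - (m:ℝ) := by linarith
        have h2 : F x ≤ F (F x - (m:ℝ)) := F.mono h1
        rw [F.map_sub_int, hconst] at h2
        linarith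
    obtain ⟨x, hx⟩ := hn
    apply hx
    induction x using QuotientAddGroup.induction_on with
    | H y => rw [hF y, hFx y, coe_add_int]
  · -- odd : shift the lift
    refine ⟨fun x => F x - m, ?_, ?_, ?_, ?_⟩
    · intro a b hab
      simpa using sub_le_sub_right (F.mono hab) (m:ℝ)
    · intro x
      show F (x + 1) - (m:ℝ) = F x - m + 1
      rw [hF1]; ring
    · intro x
      show F (F x - (m:ℝ)) - m = x + 1
      have hs : F (F x - (m:ℝ)) = F (F x) - m := F.map_sub_int _ _
      rw [hs, hconst]
      have : (n₀ : ℝ) = 2*m + 1 := by exact_mod_cast hm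
      linarith
    · intro x
      show σ ((x:ℝ) : S1) = ((F x - m : ℝ) : S1)
      rw [hF x]
      have h1 : ((F x : ℝ) : S1) = ((F x - m + m : ℝ) : S1) := by norm_num
      rw [h1, coe_add_int]

/- ### Step 2 : conjugating lift to translation by 1/2 -/

lemma exists_conj (G : ℝ → ℝ) (hm : Monotone G) (hp : ∀ x, G (x+1) = G x + 1)
    (hg : ∀ x, G (G x) = x + 1) :
    ∃ K : ℝ ≃o ℝ, (∀ x, K (x+1) = K x + 1) ∧ (∀ x, K (G x) = K x + 1/2) := by
  have hGinj : Function.Injective G := by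
    intro a b hab
    have h1 := hg a
    rw [hab, hg b] at h1
    linarith
  have hGs : StrictMono G := hm.strictMono_of_injective hGinj
  have hGsurj : Function.Surjective G := fun y => ⟨G (y - 1), by rw [hg]; ring⟩
  have hGcont : Continuous G := by
    have : ⇑(StrictMono.orderIsoOfSurjective G hGs hGsurj) = G :=
      StrictMono.coe_orderIsoOfSurjective G hGs hGsurj
    rw [← this]
    exact (StrictMono.orderIsoOfSurjective G hGs hGsurj).toHomeomorph.continuous
  set K : ℝ → ℝ := fun x => (x + G x) / 2 with hKdef
  have hKs : StrictMono K := by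
    intro a b hab
    have := hm hab.le
    simp only [hKdef]
    have : a + G a < b + G b := by linarith [hm hab.le]
    linarith
  have hKper : ∀ x, K (x+1) = K x + 1 := by
    intro x; simp only [hKdef, hp]; ring
  have hKcont : Continuous K := by
    simp only [hKdef]
    exact (continuous_id.add hGcont).div_const 2
  have hKsurj : Function.Surjective K := by
    apply hKcont.surjective
    · apply Filter.tendsto_atTop_atTop_of_monotone hKs.monotone
      intro b
      refine ⟨(⌈b - K 0⌉ : ℝ), ?_⟩
      have h1 : K (0 + (⌈b - K 0⌉:ℤ)) = K 0 + (⌈b - K 0⌉:ℤ) := shift_int hKper _ 0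
      rw [zero_add] at h1
      rw [h1]
      linarith [Int.le_ceil (b - K 0)]
    · apply Filter.tendsto_atBot_atBot_of_monotone hKs.monotone
      intro b
      refine ⟨((-⌈K 0 - b⌉ : ℤ) : ℝ), ?_⟩
      have h1 : K (0 + ((-⌈K 0 - b⌉ : ℤ):ℝ)) = K 0 + ((-⌈K 0 - b⌉ : ℤ):ℝ) :=
        shift_int hKper _ 0
      rw [zero_add] at h1
      rw [h1]
      push_cast
      linarith [Int.le_ceil (K 0 - b)]
  refine ⟨StrictMono.orderIsoOfSurjective K hKs hKsurj, ?_, ?_⟩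
  · intro x
    rw [StrictMono.coe_orderIsoOfSurjective]
    exact hKper x
  · intro x
    rw [StrictMono.coe_orderIsoOfSurjective]
    show (G x + G (G x)) / 2 = (x + G x) / 2 + 1/2
    rw [hg]
    ring

/-- Any two non-trivial orientation preserving involutions of the circle are conjugate
in `Homeo⁺(S¹)`. -/
theorem stmt4 (σ₁ σ₂ : S1 ≃ₜ S1) (h₁ : OrientationPreserving σ₁)
    (h₂ : OrientationPreserving σ₂) (hi₁ : IsInvolution σ₁) (hi₂ : IsInvolution σ₂)
    (hn₁ : ∃ x, σ₁ x ≠ x) (hn₂ : ∃ x, σ₂ x ≠ x) :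
    ∃ k : S1 ≃ₜ S1, OrientationPreserving k ∧ ∀ x, k (σ₁ (k.symm x)) = σ₂ x := by
  obtain ⟨G₁, hm₁, hp₁, hg₁, hl₁⟩ := exists_good_lift σ₁ h₁ hi₁ hn₁
  obtain ⟨G₂, hm₂, hp₂, hg₂, hl₂⟩ := exists_good_lift σ₂ h₂ hi₂ hn₂
  obtain ⟨K₁, hK₁per, hK₁G⟩ := exists_conj G₁ hm₁ hp₁ hg₁
  obtain ⟨K₂, hK₂per, hK₂G⟩ := exists_conj G₂ hm₂ hp₂ hg₂
  set k₁ := mkHomeo K₁ hK₁per with hk₁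
  set k₂ := mkHomeo K₂ hK₂per with hk₂
  refine ⟨k₁.trans k₂.symm, ?_, ?_⟩
  · -- orientation preserving
    refine ⟨⟨⟨fun x => K₂.symm (K₁ x), fun a b hab => K₂.symm.monotone (K₁.monotone hab)⟩,
        fun x => ?_⟩, fun x => ?_⟩
    · show K₂.symm (K₁ (x + 1)) = K₂.symm (K₁ x) + 1
      rw [hK₁per, symm_shift K₂ hK₂per]
    · show (k₁.trans k₂.symm) ((x : ℝ) : S1) = _
      rw [Homeomorph.trans_apply, hk₁, hk₂, mkHomeo_coe, mkHomeo_symm_coe]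
      rfl
  · -- conjugacy
    have hcomm : ∀ x : S1, (k₁.trans k₂.symm) (σ₁ x) = σ₂ ((k₁.trans k₂.symm) x) := by
      intro x
      induction x using QuotientAddGroup.induction_on with
      | H y =>
        rw [Homeomorph.trans_apply, Homeomorph.trans_apply, hl₁ y, hk₁, hk₂,
          mkHomeo_coe, mkHomeo_symm_coe, mkHomeo_coe, mkHomeo_symm_coe,
          hl₂ (K₂.symm (K₁ y))]
        congr 1
        have h1 : K₂ (G₂ (K₂.symm (K₁ y))) = K₁ y + 1/2 := by
          rw [hK₂G, K₂.apply_symm_apply]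
        have h2 : G₂ (K₂.symm (K₁ y)) = K₂.symm (K₁ y + 1/2) := by
          apply K₂.injective
          rw [h1, K₂.apply_symm_apply]
        rw [h2, ← hK₁G]
    intro x
    rw [hcomm (( k₁.trans k₂.symm).symm x)]
    congr 1
    exact (k₁.trans k₂.symm).apply_symm_apply x
end
end

section
/- If f is a fixed point free homeomorphism of the real line, then there exists an orientation reversing involution τ of ℝ such that τ ∘ f ∘ τ = f⁻¹. -/
noncomputable section

open scoped Classical

lemma orbit_unbounded (f : ℝ ≃ₜ ℝ) (hf : ∀ x : ℝ, x < f x) (s : ℕ → ℝ)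
    (hs : ∀ n, s (n + 1) = f (s n)) : ¬ BddAbove (Set.range s) := by
  intro hbd
  have hmono : Monotone s := monotone_nat_of_le_succ (fun n => by rw [hs]; exact (hf _).le)
  have hlim : Filter.Tendsto s Filter.atTop (nhds (⨆ n, s n)) := tendsto_atTop_ciSup hmono hbd
  set L := ⨆ n, s n
  have h1 : Filter.Tendsto (fun n => s (n + 1)) Filter.atTop (nhds L) :=
    hlim.comp (Filter.tendsto_add_atTop_nat 1)
  have h2 : Filter.Tendsto (fun n => f (s n)) Filter.atTop (nhds (f L)) :=
    (f.continuous.tendsto L).comp hlim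
  have : f L = L := tendsto_nhds_unique (by simpa [hs] using h2) h1
  exact absurd this (ne_of_gt (hf L))

lemma key_lemma (f : ℝ ≃ₜ ℝ) (hf : ∀ x : ℝ, x < f x) :
    ∃ τ : ℝ ≃ₜ ℝ, StrictAnti (τ : ℝ → ℝ) ∧ (∀ x, τ (τ x) = x) ∧
      ∀ x, τ (f (τ x)) = f.symm x := by
  have hmf : StrictMono f ∨ StrictAnti f := f.continuous.strictMono_of_inj f.injective
  have hmf : StrictMono f := by
    rcases hmf with h | h
    · exact h
    · exact absurd (h (hf 0)) (not_lt.2 (hf (f 0)).le)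
  set e : Equiv.Perm ℝ := f.toEquiv with he
  have happ : ∀ x, e x = f x := fun _ => rfl
  have hsymm : ∀ x, e⁻¹ x = f.symm x := fun _ => rfl
  have hsmono : StrictMono (⇑e⁻¹) := by
    intro x y hxy
    rw [hsymm, hsymm]
    have h2 : f (f.symm x) < f (f.symm y) := by simpa using hxy
    exact hmf.lt_iff_lt.1 h2
  have hmul : ∀ (p q : Equiv.Perm ℝ) (x : ℝ), (p * q) x = p (q x) := fun _ _ _ => rfl
  have zmono : ∀ n : ℤ, StrictMono (⇑(e ^ n)) := by
    intro n
    induction n using Int.induction_on with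
    | zero => simpa using strictMono_id
    | succ k ih =>
        have hh : (e ^ ((k : ℤ) + 1)) = e * e ^ (k : ℤ) := by
          rw [show (k : ℤ) + 1 = 1 + k by ring, zpow_add, zpow_one]
        rw [hh]
        intro x y hxy
        rw [hmul, hmul, happ, happ]
        exact hmf (ih hxy)
    | pred k ih =>
        have hh : (e ^ (-(k : ℤ) - 1)) = e⁻¹ * e ^ (-(k : ℤ)) := by
          rw [show -(k : ℤ) - 1 = (-1) + (-k) by ring, zpow_add, zpow_neg_one]
        rw [hh]
        intro x y hxy
        rw [hmul, hmul]
        exact hsmono (ih hxy)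
  set a : ℤ → ℝ := fun n => (e ^ n) 0 with ha
  have ha_succ : ∀ n : ℤ, a (n + 1) = f (a n) := by
    intro n
    show (e ^ (n + 1)) 0 = f ((e ^ n) 0)
    rw [show n + 1 = 1 + n by ring, zpow_add, zpow_one, hmul, happ]
  have amono : StrictMono a := strictMono_int_of_lt_succ (fun n => by
    rw [ha_succ]; exact hf (a n))
  -- unboundedness above
  have hub : ∀ x : ℝ, ∃ n : ℤ, x < a n := by
    intro x
    by_contra hcon
    push_neg at hcon
    refine orbit_unbounded f hf (fun n => a n)
      (fun n => by have := ha_succ (n : ℤ); simpa using this) ?_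
    refine ⟨x, ?_⟩
    rintro y ⟨n, rfl⟩
    simpa using hcon n
  -- unboundedness below
  have hlb : ∀ x : ℝ, ∃ n : ℤ, a n ≤ x := by
    intro x
    by_contra hcon
    push_neg at hcon
    set g : ℝ ≃ₜ ℝ := (Homeomorph.neg ℝ).trans (f.symm.trans (Homeomorph.neg ℝ)) with hg
    have hgapp : ∀ y, g y = -(f.symm (-y)) := fun _ => rfl
    have hgf : ∀ y : ℝ, y < g y := by
      intro y
      rw [hgapp]
      have : f.symm (-y) < -y := by
        have := hf (f.symm (-y)); simpa using this
      linarith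
    refine orbit_unbounded g hgf (fun n => -a (-n)) ?_ ?_
    · intro n
      rw [hgapp]
      have h1 : a (-(n : ℤ)) = f (a (-(n : ℤ) - 1)) := by
        have := ha_succ (-(n : ℤ) - 1); simpa using this
      have h2 : f.symm (a (-(n : ℤ))) = a (-((n : ℕ) + 1 : ℕ) : ℤ) := by
        rw [h1, Homeomorph.symm_apply_apply]
        congr 1
        push_cast; ring
      rw [neg_neg, h2]
    · refine ⟨-x, ?_⟩
      rintro y ⟨n, rfl⟩
      show -a (-(n : ℤ)) ≤ -x
      have := hcon (-(n : ℤ))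
      linarith
  -- the integer part function
  have hNex : ∀ x : ℝ, ∃ n : ℤ, a n ≤ x ∧ x < a (n + 1) := by
    intro x
    obtain ⟨b, hb⟩ := hub x
    obtain ⟨n, hn1, hn2⟩ := Int.exists_greatest_of_bdd (P := fun n => a n ≤ x)
      ⟨b, fun z hz => by
        by_contra hzb
        push_neg at hzb
        exact absurd hb (not_lt.2 ((amono hzb).le.trans hz))⟩ (hlb x)
    refine ⟨n, hn1, ?_⟩
    by_contra hcon
    push_neg at hcon
    have := hn2 (n + 1) hcon
    omega
  set N : ℝ → ℤ := fun x => Classical.choose (hNex x) with hN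
  have hNspec : ∀ x : ℝ, a (N x) ≤ x ∧ x < a (N x + 1) := fun x => Classical.choose_spec (hNex x)
  have hNuniq : ∀ (x : ℝ) (n : ℤ), a n ≤ x → x < a (n + 1) → N x = n := by
    intro x n h1 h2
    obtain ⟨h3, h4⟩ := hNspec x
    rcases lt_trichotomy (N x) n with h | h | h
    · have hle : N x + 1 ≤ n := by omega
      exact absurd (lt_of_lt_of_le h4 ((amono.le_iff_le).2 hle)) (not_lt.2 h1)
    · exact h
    · have hle : n + 1 ≤ N x := by omega
      exact absurd (lt_of_lt_of_le h2 ((amono.le_iff_le).2 hle)) (not_lt.2 h3)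
  set c : ℝ := f 0 with hc
  have hcpos : 0 < c := hf 0
  have hzinv : ∀ (n : ℤ) (x : ℝ), (e ^ (-n)) ((e ^ n) x) = x := by
    intro n x
    rw [← hmul, ← zpow_add]
    simp
  have hfrac : ∀ x : ℝ, 0 ≤ (e ^ (-(N x))) x ∧ (e ^ (-(N x))) x < c := by
    intro x
    obtain ⟨h1, h2⟩ := hNspec x
    constructor
    · have h3 := (zmono (-(N x))).le_iff_le.2 h1
      rw [show a (N x) = (e ^ (N x)) 0 from rfl, hzinv] at h3
      exact h3
    · have h3 := zmono (-(N x)) h2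
      rw [show a (N x + 1) = (e ^ (N x + 1)) 0 from rfl] at h3
      have heq : (e ^ (-(N x))) ((e ^ (N x + 1)) 0) = c := by
        rw [← hmul, ← zpow_add, show -(N x) + (N x + 1) = 1 by ring, zpow_one, happ, hc]
      rwa [heq] at h3
  set h : ℝ → ℝ := fun x => (N x : ℝ) + (e ^ (-(N x))) x / c with hh
  have hmono : StrictMono h := by
    intro x y hxy
    have hle : N x ≤ N y := by
      by_contra hcon
      push_neg at hcon
      have hle2 : N y + 1 ≤ N x := by omega
      have h5 := lt_of_lt_of_le (hNspec y).2 ((amono.le_iff_le).2 hle2)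
      have h6 := (hNspec x).1
      linarith
    rcases eq_or_lt_of_le hle with heq | hlt
    · have hlt2 : (e ^ (-(N y))) x < (e ^ (-(N y))) y := zmono _ hxy
      have hdiv : (e ^ (-(N y))) x / c < (e ^ (-(N y))) y / c := by gcongr
      simp only [hh, heq]
      linarith
    · have h1 : h x < (N x : ℝ) + 1 := by
        simp only [hh]
        have h0 := (hfrac x).2
        have : (e ^ (-(N x))) x / c < 1 := (div_lt_one hcpos).2 h0
        linarith
      have h2 : ((N x : ℝ) + 1) ≤ (N y : ℝ) := by exact_mod_cast hlt
      have h3 : (N y : ℝ) ≤ h y := by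
        simp only [hh]
        have h0 := (hfrac y).1
        have : 0 ≤ (e ^ (-(N y))) y / c := div_nonneg h0 hcpos.le
        linarith
      linarith
  have hsurj : Function.Surjective h := by
    intro r
    refine ⟨(e ^ (⌊r⌋)) (Int.fract r * c), ?_⟩
    have hN' : N ((e ^ (⌊r⌋)) (Int.fract r * c)) = ⌊r⌋ := by
      apply hNuniq
      · rw [show a ⌊r⌋ = (e ^ (⌊r⌋)) 0 from rfl]
        exact (zmono ⌊r⌋).le_iff_le.2 (mul_nonneg (Int.fract_nonneg r) hcpos.le)
      · have heq : a (⌊r⌋ + 1) = (e ^ (⌊r⌋)) c := by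
          rw [show a (⌊r⌋ + 1) = (e ^ (⌊r⌋ + 1)) 0 from rfl,
            show ⌊r⌋ + 1 = ⌊r⌋ + 1 by ring, zpow_add, zpow_one, hmul, happ, hc]
        rw [heq]
        apply zmono
        nlinarith [Int.fract_lt_one r, Int.fract_nonneg r]
    simp only [hh, hN', hzinv]
    rw [mul_div_assoc, div_self hcpos.ne', mul_one, Int.fract]
    ring
  have hsemi : ∀ x, h (f x) = h x + 1 := by
    intro x
    obtain ⟨h1, h2⟩ := hNspec x
    have hNf : N (f x) = N x + 1 := by
      apply hNuniq
      · rw [ha_succ]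
        exact hmf.le_iff_le.2 h1
      · rw [ha_succ]
        exact hmf h2
    have hfr : (e ^ (-(N x + 1))) (f x) = (e ^ (-(N x))) x := by
      have hq : (e ^ (-(N x + 1))) * e = e ^ (-(N x)) := by
        have hz := zpow_add e (-(N x + 1)) 1
        rw [zpow_one] at hz
        rw [← hz]
        congr 1
        ring
      rw [← happ, ← hmul, hq]
    simp only [hh, hNf, hfr]
    push_cast
    ring
  -- build the order iso and τ
  set H : ℝ ≃o ℝ := StrictMono.orderIsoOfSurjective h hmono hsurj with hH
  have hHapp : ∀ x, H x = h x := fun _ => rfl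
  set τ : ℝ ≃ₜ ℝ := H.toHomeomorph.trans ((Homeomorph.neg ℝ).trans H.toHomeomorph.symm) with hτ
  have hτapp : ∀ x, τ x = H.symm (-(H x)) := fun _ => rfl
  have hfH : ∀ x, f x = H.symm (H x + 1) := by
    intro x
    have hx : H (f x) = H x + 1 := by rw [hHapp, hHapp]; exact hsemi x
    rw [← hx]; simp
  have hfsymmH : ∀ x, f.symm x = H.symm (H x - 1) := by
    intro x
    have h1 := hfH (f.symm x)
    rw [Homeomorph.apply_symm_apply] at h1
    have h2 : H x = H (f.symm x) + 1 := by
      conv_lhs => rw [h1]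
      simp
    rw [show H x - 1 = H (f.symm x) by rw [h2]; ring]
    simp
  refine ⟨τ, ?_, ?_, ?_⟩
  · intro x y hxy
    rw [hτapp, hτapp]
    exact H.symm.strictMono (by simpa using H.strictMono hxy)
  · intro x
    rw [hτapp, hτapp]
    simp
  · intro x
    rw [hτapp, hτapp, hfH, hfsymmH]
    simp only [OrderIso.apply_symm_apply]
    congr 1
    ring

/-- A fixed point free homeomorphism of the real line is reversed by an orientation
reversing involution of `ℝ`. -/
theorem stmt6 (f : ℝ ≃ₜ ℝ) (hf : ∀ x : ℝ, f x ≠ x) :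
    ∃ τ : ℝ ≃ₜ ℝ, StrictAnti (τ : ℝ → ℝ) ∧ (∀ x, τ (τ x) = x) ∧
      ∀ x, τ (f (τ x)) = f.symm x := by
  have hsign : (∀ x : ℝ, x < f x) ∨ (∀ x : ℝ, f x < x) := by
    by_contra hcon
    push_neg at hcon
    obtain ⟨⟨b, hb⟩, ⟨a, ha⟩⟩ := hcon
    have hb' : f b < b := lt_of_le_of_ne hb (hf b)
    have ha' : a < f a := lt_of_le_of_ne ha (fun h => hf a h.symm)
    have hcont : ContinuousOn (fun x => f x - x) (Set.uIcc a b) :=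
      (f.continuous.sub continuous_id).continuousOn
    have h0 : (0 : ℝ) ∈ Set.uIcc (f a - a) (f b - b) :=
      Set.mem_uIcc.2 (Or.inr ⟨by linarith, by linarith⟩)
    obtain ⟨c, _, hc⟩ := intermediate_value_uIcc hcont h0
    simp only at hc
    exact hf c (by linarith)
  rcases hsign with h | h
  · exact key_lemma f h
  · have h' : ∀ x : ℝ, x < f.symm x := by
      intro x
      have := h (f.symm x)
      simpa using this
    obtain ⟨τ, h1, h2, h3⟩ := key_lemma f.symm h'
    refine ⟨τ, h1, h2, ?_⟩
    have hE : ∀ y, f.symm (τ y) = τ (f y) := by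
      intro y
      have h4 := h3 y
      simp only [Homeomorph.symm_symm] at h4
      have := congrArg τ h4
      rwa [h2] at this
    intro x
    have := hE (τ x)
    rw [h2] at this
    exact this.symm
end
end

section
/- Let f be an orientation preserving homeomorphism of the circle with a fixed point, and let h be any homeomorphism of the circle. Then the signature of h ∘ f ∘ h⁻¹ equals deg(h) · (Δ_f ∘ h⁻¹), where Δ_f is the signature of f and deg(h) ∈ {1,−1} is the degree of h. -/
noncomputable section

open scoped Classical

lemma S1coe_eq_coe_iff {u v : ℝ} : (u : S1) = (v : S1) ↔ ∃ n : ℤ, u - v = n := by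
  rw [← sub_eq_zero, ← QuotientAddGroup.mk_sub, AddCircle.coe_eq_zero_iff]
  constructor
  · rintro ⟨n, hn⟩; exact ⟨n, by simpa using hn.symm⟩
  · rintro ⟨n, hn⟩; exact ⟨n, by simpa using hn.symm⟩

lemma rep_coe (y : S1) : ((rep y : ℝ) : S1) = y :=
  (AddCircle.equivIco 1 0).symm_apply_apply y

lemma lift_strictMono {g : S1 ≃ₜ S1} {K : CircleDeg1Lift} (hK : IsLiftOf g K) :
    StrictMono K := by
  have h1 : ∀ s t : ℝ, s < t → K s = K t → False := by
    intro s t hst heq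
    rcases lt_or_ge (t - s) 1 with hlt | hge
    · have hne : (s : S1) ≠ (t : S1) := by
        rw [Ne, S1coe_eq_coe_iff]
        rintro ⟨n, hn⟩
        have h1 : (n : ℝ) < 0 := by rw [← hn]; linarith
        have h2 : (-1 : ℝ) < n := by rw [← hn]; linarith
        have h1' : n < 0 := by exact_mod_cast h1
        have h2' : (-1 : ℤ) < n := by exact_mod_cast h2
        omega
      exact hne (g.injective (by rw [hK s, hK t, heq]))
    · have h2 : K (s + 1) ≤ K t := K.monotone (by linarith)
      rw [K.map_add_one] at h2
      have h3 : K s ≤ K t := K.monotone hst.le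
      linarith [heq ▸ h2]
  intro s t hst
  rcases lt_or_eq_of_le (K.monotone hst.le) with h | h
  · exact h
  · exact absurd h (fun h' => h1 s t hst h')

lemma disp_lt_one {K : CircleDeg1Lift} (hKs : StrictMono K) {b : ℝ} (hb : K b = b)
    (t : ℝ) : |K t - t| < 1 := by
  set k : ℤ := ⌊t - b⌋ with hk
  have h1 : b ≤ t - k := by
    have := Int.floor_le (t - b); rw [← hk] at this; linarith
  have h2 : t - k < b + 1 := by
    have := Int.lt_floor_add_one (t - b); rw [← hk] at this; linarith
  have e : K (t - k) = K t - k := by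
    have := K.map_add_int (t - (k : ℝ)) k
    rw [sub_add_cancel] at this
    linarith
  have l1 : b ≤ K (t - k) := by
    have := K.monotone h1; rwa [hb] at this
  have l2 : K (t - k) < b + 1 := by
    have := hKs h2; rwa [K.map_add_one, hb] at this
  rw [abs_lt]; constructor <;> linarith

lemma shift_int_s8 {H : ℝ → ℝ} {ε : ℝ} (hs : ∀ x, H (x + 1) = H x + ε) (x : ℝ) :
    ∀ n : ℤ, H (x + n) = H x + ε * n := by
  intro n
  induction n using Int.induction_on with
  | zero => simp
  | succ k ih =>
      have h0 : x + ((k : ℤ) + 1 : ℤ) = (x + (k : ℤ)) + 1 := by push_cast; ring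
      rw [h0, hs, ih]; push_cast; ring
  | pred k ih =>
      have h1 : x + (-(k : ℤ) - 1 : ℤ) + 1 = x + (-(k : ℤ) : ℤ) := by push_cast; ring
      have := hs (x + (-(k : ℤ) - 1 : ℤ))
      rw [h1, ih] at this
      push_cast at this ⊢
      linarith

lemma core (f h : S1 ≃ₜ S1) (F G : CircleDeg1Lift) (hF : IsLiftOf f F)
    (a : ℝ) (ha : F a = a) (b : ℝ) (hb : G b = b)
    (hG : IsLiftOf ((h.symm.trans f).trans h) G)
    (H : ℝ → ℝ) (ε : ℝ)
    (hεH : (ε = 1 ∧ StrictMono H) ∨ (ε = -1 ∧ StrictAnti H))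
    (Hshift : ∀ x, H (x + 1) = H x + ε)
    (Hlift : ∀ t : ℝ, h (t : S1) = ((H t : ℝ) : S1)) :
    ∀ y : S1, signature G y = ε * signature F (h.symm y) := by
  have Fs : StrictMono F := lift_strictMono hF
  have Gs : StrictMono G := lift_strictMono hG
  -- key congruence
  have key : ∀ t : ℝ, ((G (H t) : ℝ) : S1) = ((H (F t) : ℝ) : S1) := by
    intro t
    have h1 : (((H t : ℝ) : S1)) = h ((t : ℝ) : S1) := (Hlift t).symm
    calc ((G (H t) : ℝ) : S1) = ((h.symm.trans f).trans h) ((H t : ℝ) : S1) :=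
          (hG (H t)).symm
      _ = h (f (h.symm ((H t : ℝ) : S1))) := by
          simp [Homeomorph.trans_apply]
      _ = h (f ((t : ℝ) : S1)) := by rw [h1, h.symm_apply_apply]
      _ = h ((F t : ℝ) : S1) := by rw [hF t]
      _ = ((H (F t) : ℝ) : S1) := Hlift (F t)
  -- G fixes H a
  have GHa : G (H a) = H a := by
    obtain ⟨n, hn⟩ : ∃ n : ℤ, G (H a) - H a = n := by
      rw [← S1coe_eq_coe_iff]
      rw [key a, ha]
    have hd : |G (H a) - H a| < 1 := disp_lt_one Gs hb (H a)
    rw [hn] at hd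
    have h1 : |n| < 1 := by exact_mod_cast hd
    have : n = 0 := by rw [abs_lt] at h1; omega
    rw [this] at hn; push_cast at hn; linarith
  -- main conjugation identity
  have main : ∀ t : ℝ, G (H t) = H (F t) := by
    intro t
    set k : ℤ := ⌊t - a⌋ with hk
    set s : ℝ := t - k with hsdef
    have hs1 : a ≤ s := by
      have := Int.floor_le (t - a); rw [← hk] at this
      rw [hsdef]; linarith
    have hs2 : s < a + 1 := by
      have := Int.lt_floor_add_one (t - a); rw [← hk] at this
      rw [hsdef]; linarith
    have ht : t = s + (k : ℝ) := by rw [hsdef]; ring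
    have hFt : F t = F s + (k : ℝ) := by
      rw [ht]; exact_mod_cast F.map_add_int s k
    -- bounds on F s
    have hFs1 : a ≤ F s := by have := F.monotone hs1; rwa [ha] at this
    have hFs2 : F s < a + 1 := by
      have := Fs hs2; rwa [F.map_add_one, ha] at this
    -- key difference at s
    obtain ⟨n, hn⟩ : ∃ n : ℤ, G (H s) - H (F s) = n := by
      rw [← S1coe_eq_coe_iff]; exact key s
    rcases hεH with ⟨rfl, Hmono⟩ | ⟨rfl, Hanti⟩
    · have hHs1 : H a ≤ H s := Hmono.monotone hs1
      have hHs2 : H s < H a + 1 := by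
        have := Hmono hs2
        have h2 := Hshift a
        linarith
      have hGH1 : H a ≤ G (H s) := by
        have := G.monotone hHs1; rwa [GHa] at this
      have hGH2 : G (H s) < H a + 1 := by
        have := Gs hHs2; rwa [G.map_add_one, GHa] at this
      have hHF1 : H a ≤ H (F s) := Hmono.monotone hFs1
      have hHF2 : H (F s) < H a + 1 := by
        have := Hmono hFs2
        have h2 := Hshift a
        linarith
      have hn0 : n = 0 := by
        have : |(n : ℝ)| < 1 := by rw [← hn, abs_lt]; constructor <;> linarith
        have h1 : |n| < 1 := by exact_mod_cast this
        rw [abs_lt] at h1; omega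
      have hmainS : G (H s) = H (F s) := by rw [hn0] at hn; push_cast at hn; linarith
      have hHt : H t = H s + (k : ℝ) := by
        rw [ht]
        have := shift_int_s8 Hshift s k
        simpa using this
      have hHFt : H (F t) = H (F s) + (k : ℝ) := by
        rw [hFt]
        have := shift_int_s8 Hshift (F s) k
        simpa using this
      rw [hHt, hHFt, ← hmainS]
      exact_mod_cast G.map_add_int (H s) k
    · have hHs1 : H s ≤ H a := Hanti.antitone hs1
      have hHs2 : H a - 1 < H s := by
        have := Hanti hs2
        have h2 := Hshift a
        linarith
      have hGH1 : G (H s) ≤ H a := by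
        have := G.monotone hHs1; rwa [GHa] at this
      have hGH2 : H a - 1 < G (H s) := by
        have h3 := Gs hHs2
        have h4 : G (H a - 1) = G (H a) - 1 := by
          have := G.map_add_int (H a - 1) 1
          push_cast at this
          rw [sub_add_cancel] at this
          linarith
        rw [h4, GHa] at h3; linarith
      have hHF1 : H (F s) ≤ H a := Hanti.antitone hFs1
      have hHF2 : H a - 1 < H (F s) := by
        have := Hanti hFs2
        have h2 := Hshift a
        linarith
      have hn0 : n = 0 := by
        have : |(n : ℝ)| < 1 := by rw [← hn, abs_lt]; constructor <;> linarith
        have h1 : |n| < 1 := by exact_mod_cast this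
        rw [abs_lt] at h1; omega
      have hmainS : G (H s) = H (F s) := by rw [hn0] at hn; push_cast at hn; linarith
      have hHt : H t = H s - (k : ℝ) := by
        rw [ht]
        have := shift_int_s8 Hshift s k
        rw [this]; ring
      have hHFt : H (F t) = H (F s) - (k : ℝ) := by
        rw [hFt]
        have := shift_int_s8 Hshift (F s) k
        rw [this]; ring
      have hGk : G (H s - (k : ℝ)) = G (H s) - (k : ℝ) := by
        have := G.map_add_int (H s) (-k)
        push_cast at this
        rw [show H s + -(k : ℝ) = H s - (k : ℝ) by ring] at this
        linarith
      rw [hHt, hHFt, hGk, hmainS]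
  -- conclusion
  intro y
  set yr : ℝ := rep y with hyr
  set xr : ℝ := rep (h.symm y) with hxr
  have cy : ((yr : ℝ) : S1) = y := rep_coe y
  have cx : ((xr : ℝ) : S1) = h.symm y := rep_coe (h.symm y)
  obtain ⟨m, hm⟩ : ∃ m : ℤ, H xr - yr = m := by
    rw [← S1coe_eq_coe_iff, ← Hlift xr, cx, h.apply_symm_apply, cy]
  have hGm : G yr = G (H xr) - m := by
    have h1 : yr = H xr + ((-m : ℤ) : ℝ) := by push_cast; linarith
    rw [h1]
    have := G.map_add_int (H xr) (-m)
    push_cast at this ⊢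
    linarith
  have hdiff : G yr - yr = H (F xr) - H xr := by
    rw [hGm, main xr]; push_cast at hm ⊢; linarith
  have hsig : signature G y = Real.sign (H (F xr) - H xr) := by
    rw [signature, ← hyr, hdiff]
  rw [hsig, signature, ← hxr]
  rcases hεH with ⟨rfl, Hmono⟩ | ⟨rfl, Hanti⟩
  · rcases lt_trichotomy (F xr) xr with hlt | heq | hgt
    · rw [Real.sign_of_neg (by linarith [Hmono hlt] : H (F xr) - H xr < 0),
        Real.sign_of_neg (by linarith : F xr - xr < 0)]; ring
    · rw [heq]; simp
    · rw [Real.sign_of_pos (by linarith [Hmono hgt] : 0 < H (F xr) - H xr),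
        Real.sign_of_pos (by linarith : 0 < F xr - xr)]; ring
  · rcases lt_trichotomy (F xr) xr with hlt | heq | hgt
    · rw [Real.sign_of_pos (by linarith [Hanti hlt] : 0 < H (F xr) - H xr),
        Real.sign_of_neg (by linarith : F xr - xr < 0)]; ring
    · rw [heq]; simp
    · rw [Real.sign_of_neg (by linarith [Hanti hgt] : H (F xr) - H xr < 0),
        Real.sign_of_pos (by linarith : 0 < F xr - xr)]; ring

/-- `Δ_{h f h⁻¹} = deg h • (Δ_f ∘ h⁻¹)` for an orientation preserving `f` with a fixed
point and any circle homeomorphism `h` (of degree `ε ∈ {1, -1}`).  Here `F` and `G` are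
the lifts with fixed points of `f` and `h f h⁻¹`, whose signatures are `Δ_f` and
`Δ_{h f h⁻¹}`. -/
theorem stmt8 (f h : S1 ≃ₜ S1) (hf : OrientationPreserving f) (hfix : ∃ x, f x = x)
    (ε : ℝ)
    (hdeg : (ε = 1 ∧ OrientationPreserving h) ∨ (ε = -1 ∧ OrientationReversing h))
    (F G : CircleDeg1Lift) (hF : IsLiftOf f F) (hFfix : ∃ x : ℝ, F x = x)
    (hG : IsLiftOf ((h.symm.trans f).trans h) G) (hGfix : ∃ x : ℝ, G x = x) :
    ∀ y : S1, signature G y = ε * signature F (h.symm y) := by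
  obtain ⟨a, ha⟩ := hFfix
  obtain ⟨b, hb⟩ := hGfix
  rcases hdeg with ⟨hε, H0, hH0⟩ | ⟨hε, H0, Hanti, Hshift, Hlift⟩
  · subst hε
    exact core f h F G hF a ha b hb hG (⇑H0) 1
      (Or.inl ⟨rfl, lift_strictMono hH0⟩) (fun x => H0.map_add_one x) hH0
  · subst hε
    exact core f h F G hF a ha b hb hG H0 (-1)
      (Or.inr ⟨rfl, Hanti⟩) (fun x => by rw [Hshift x]; ring) Hlift
end
end

section
/- Every orientation preserving homeomorphism of the circle can be written as a composite of three orientation preserving involutions. -/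
noncomputable section

open scoped Classical

open Set

section RealAux


/-- `S` commutes with integer translation. -/
def LiftIso (S : ℝ ≃o ℝ) : Prop := ∀ x, S (x + 1) = S x + 1

/-- `S` is the lift of an involution: `S∘S` is translation by `k`. -/
def IsInvLift (S : ℝ ≃o ℝ) (k : ℤ) : Prop := ∀ x, S (S x) = x + k

/-- `F` is a product of three involution lifts (up to integer translation). -/
def RealTriple (F : ℝ ≃o ℝ) : Prop :=
  ∃ (S₁ S₂ S₃ : ℝ ≃o ℝ) (k₁ k₂ k₃ m : ℤ),
    LiftIso S₁ ∧ IsInvLift S₁ k₁ ∧ LiftIso S₂ ∧ IsInvLift S₂ k₂ ∧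
    LiftIso S₃ ∧ IsInvLift S₃ k₃ ∧
    ∀ x, S₁ (S₂ (S₃ x)) = F x + m

namespace LiftIso

theorem map_int {S : ℝ ≃o ℝ} (hS : LiftIso S) (n : ℤ) : ∀ x, S (x + n) = S x + n := by
  induction n using Int.induction_on with
  | zero => simp
  | succ k ih =>
      intro x
      have h1 := hS (x + k)
      have h2 := ih x
      push_cast at h1 h2 ⊢
      rw [show x + ((k:ℝ) + 1) = x + (k:ℝ) + 1 by ring, h1, h2]; ring
  | pred k ih =>
      intro x
      have h2 := hS (x + (-(k:ℝ) - 1))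
      rw [show x + (-(k:ℝ) - 1) + 1 = x + -(k:ℝ) by ring] at h2
      have h3 : S (x + -(k:ℝ)) = S x + -(k:ℝ) := by
        have := ih x
        push_cast at this
        convert this using 2 <;> ring
      push_cast
      linarith [h2, h3]

theorem symm {S : ℝ ≃o ℝ} (hS : LiftIso S) : LiftIso S.symm := by
  intro x
  have := hS (S.symm x)
  apply S.injective
  rw [S.apply_symm_apply, this, S.apply_symm_apply]

theorem symm_map_int {S : ℝ ≃o ℝ} (hS : LiftIso S) (n : ℤ) :
    ∀ x, S.symm (x + n) = S.symm x + n := (hS.symm).map_int n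

end LiftIso

theorem liftIso_refl : LiftIso (OrderIso.refl ℝ) := fun _ => rfl

theorem isInvLift_refl : IsInvLift (OrderIso.refl ℝ) 0 := by intro x; simp

theorem liftIso_trans {S T : ℝ ≃o ℝ} (hS : LiftIso S) (hT : LiftIso T) :
    LiftIso (S.trans T) := by
  intro x; simp only [OrderIso.trans_apply, hS x, hT (S x)]


/-- Gluing lemma: from data on a half-period, build an involution lift. -/
theorem glue_invol (p q : ℝ) (h1 : p < q) (h2 : q < p + 1) (θ : ℝ → ℝ)
    (hm : StrictMonoOn θ (Icc p q))
    (hs : SurjOn θ (Icc p q) (Icc q (p + 1)))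
    (hθp : θ p = q) (hθq : θ q = p + 1) :
    ∃ S : ℝ ≃o ℝ, LiftIso S ∧ IsInvLift S 1 ∧ ∀ x ∈ Icc p q, S x = θ x := by
  have hpq : p ∈ Icc p q := ⟨le_refl _, h1.le⟩
  have hqq : q ∈ Icc p q := ⟨h1.le, le_refl _⟩
  -- inverse on the second half, via choice
  set θinv : ℝ → ℝ := fun y => if h : y ∈ Icc q (p + 1) then (hs h).choose else p with hθinv
  have hinv : ∀ y ∈ Icc q (p + 1), θinv y ∈ Icc p q ∧ θ (θinv y) = y := by
    intro y hy
    have := (hs hy).choose_spec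
    simp only [hθinv, dif_pos hy]
    exact ⟨this.1, this.2⟩
  have hinj := hm.injOn
  have hinvθ : ∀ x ∈ Icc p q, θinv (θ x) = x := by
    intro x hx
    have hmem : θ x ∈ Icc q (p + 1) := by
      constructor
      · rw [← hθp]; exact hm.monotoneOn hpq hx hx.1
      · rw [← hθq]; exact hm.monotoneOn hx hqq hx.2
    exact hinj ((hinv _ hmem).1) hx ((hinv _ hmem).2.trans rfl)
  have hinvq : θinv q = p := by
    have h := hinvθ p hpq; rwa [hθp] at h
  have hinvtop : θinv (p + 1) = q := by
    have h := hinvθ q hqq; rwa [hθq] at h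
  have hinvmono : StrictMonoOn θinv (Icc q (p + 1)) := by
    intro x hx y hy hxy
    rcases lt_trichotomy (θinv x) (θinv y) with h | h | h
    · exact h
    · exfalso; have := (hinv x hx).2; rw [h, (hinv y hy).2] at this
      exact absurd this (ne_of_gt hxy)
    · exfalso
      have := hm (hinv y hy).1 (hinv x hx).1 h
      rw [(hinv x hx).2, (hinv y hy).2] at this
      exact absurd hxy (not_lt_of_gt this)
  -- one-period function
  set Xi : ℝ → ℝ := fun x => if x ≤ q then θ x else θinv x + 1 with hXi
  have hXi_lb : ∀ r ∈ Ico p (p + 1), q ≤ Xi r := by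
    intro r hr
    by_cases h : r ≤ q
    · simp only [hXi, if_pos h]
      rw [← hθp]; exact hm.monotoneOn hpq ⟨hr.1, h⟩ hr.1
    · push_neg at h
      simp only [hXi, if_neg (not_le_of_gt h)]
      have := (hinv r ⟨h.le, hr.2.le⟩).1.1
      linarith
  have hXi_ub : ∀ r ∈ Ico p (p + 1), Xi r < q + 1 := by
    intro r hr
    by_cases h : r ≤ q
    · simp only [hXi, if_pos h]
      have := hm.monotoneOn ⟨hr.1, h⟩ hqq h
      rw [hθq] at this; linarith
    · push_neg at h
      simp only [hXi, if_neg (not_le_of_gt h)]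
      have h3 := (hinv r ⟨h.le, hr.2.le⟩).1.2
      rcases lt_or_eq_of_le h3 with h4 | h4
      · linarith
      · exfalso
        have := (hinv r ⟨h.le, hr.2.le⟩).2
        rw [h4, hθq] at this
        linarith [hr.2, this]
  have hXi_mono : StrictMonoOn Xi (Ico p (p + 1)) := by
    intro x hx y hy hxy
    by_cases hxq : x ≤ q
    · by_cases hyq : y ≤ q
      · simpa only [hXi, if_pos hxq, if_pos hyq] using hm ⟨hx.1, hxq⟩ ⟨hy.1, hyq⟩ hxy
      · push_neg at hyq
        simp only [hXi, if_pos hxq, if_neg (not_le_of_gt hyq)]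
        have hA : θ x ≤ p + 1 := by
          have := hm.monotoneOn ⟨hx.1, hxq⟩ hqq hxq; rw [hθq] at this; exact this
        have hB : p < θinv y := by
          have hmem : y ∈ Icc q (p + 1) := ⟨hyq.le, hy.2.le⟩
          rcases lt_or_eq_of_le (hinv y hmem).1.1 with h | h
          · exact h
          · exfalso
            have := (hinv y hmem).2
            rw [← h, hθp] at this
            exact absurd this (ne_of_lt hyq)
        linarith
    · push_neg at hxq
      have hyq : ¬ y ≤ q := by push_neg; linarith
      simp only [hXi, if_neg (not_le_of_gt hxq), if_neg hyq]
      push_neg at hyq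
      have := hinvmono ⟨hxq.le, hx.2.le⟩ ⟨hyq.le, hy.2.le⟩ hxy
      linarith
  -- full function
  set Sf : ℝ → ℝ := fun x => Xi (p + Int.fract (x - p)) + (⌊x - p⌋ : ℝ) with hSf
  have hr_mem : ∀ x : ℝ, p + Int.fract (x - p) ∈ Ico p (p + 1) := by
    intro x
    constructor
    · linarith [Int.fract_nonneg (x - p)]
    · linarith [Int.fract_lt_one (x - p)]
  have hSf_eq : ∀ x ∈ Ico p (p + 1), Sf x = Xi x := by
    intro x hx
    have h0 : (0:ℝ) ≤ x - p := by linarith [hx.1]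
    have h1' : x - p < 1 := by linarith [hx.2]
    have hfl : ⌊x - p⌋ = 0 := Int.floor_eq_zero_iff.mpr ⟨h0, h1'⟩
    have hfr : Int.fract (x - p) = x - p := by
      rw [Int.fract]; rw [hfl]; simp
    simp only [hSf, hfr, hfl]
    norm_num
  have hSf_int : ∀ (x : ℝ) (n : ℤ), Sf (x + n) = Sf x + n := by
    intro x n
    simp only [hSf]
    rw [show x + (n:ℝ) - p = (x - p) + n by ring, Int.fract_add_intCast, Int.floor_add_intCast]
    push_cast; ring
  have hSf_mono : StrictMono Sf := by
    intro x y hxy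
    have hfloor : ⌊x - p⌋ ≤ ⌊y - p⌋ := Int.floor_le_floor (by linarith)
    rcases lt_or_eq_of_le hfloor with h | h
    · have hub := hXi_ub _ (hr_mem x)
      have hlb := hXi_lb _ (hr_mem y)
      simp only [hSf]
      have : (⌊x - p⌋ : ℝ) + 1 ≤ (⌊y - p⌋ : ℝ) := by exact_mod_cast Int.add_one_le_iff.mpr h
      linarith
    · have : p + Int.fract (x - p) < p + Int.fract (y - p) := by
        have : Int.fract (x - p) < Int.fract (y - p) := by
          rw [Int.fract, Int.fract, ← h]
          linarith
        linarith
      have := hXi_mono (hr_mem x) (hr_mem y) this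
      simp only [hSf, ← h]
      linarith
  have hSf_surj : Function.Surjective Sf := by
    intro y
    set k := ⌊y - q⌋ with hk
    set y' := y - k with hy'
    have hy'mem : y' ∈ Ico q (q + 1) := by
      constructor
      · simp only [hy', hk]; linarith [Int.floor_le (y - q)]
      · simp only [hy', hk]; linarith [Int.lt_floor_add_one (y - q)]
    have key : ∃ x ∈ Ico p (p + 1), Xi x = y' := by
      by_cases hcase : y' ≤ p + 1
      · obtain ⟨x, hx, hθx⟩ := hs ⟨hy'mem.1, hcase⟩
        refine ⟨x, ⟨hx.1, lt_of_le_of_lt hx.2 h2⟩, ?_⟩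
        simp only [hXi, if_pos hx.2, hθx]
      · push_neg at hcase
        have hyd : y' - 1 ∈ Icc p q := ⟨by linarith, by linarith [hy'mem.2]⟩
        refine ⟨θ (y' - 1), ?_, ?_⟩
        · constructor
          · have := hXi_lb  -- θ (y'-1) ≥ q ≥ p...
            have := hm.monotoneOn hpq hyd hyd.1
            rw [hθp] at this; linarith
          · have := hm.monotoneOn hyd hqq hyd.2
            rw [hθq] at this
            rcases lt_or_eq_of_le this with h | h
            · exact h
            · exfalso
              have h' : θ (y' - 1) = θ q := by rw [hθq]; exact h
              have h2' := hinj hyd hqq h'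
              have : y' = q + 1 := by linarith [h2']
              linarith [hy'mem.2, this]
        · have hgtq : q < θ (y' - 1) := by
            rcases lt_or_eq_of_le (le_trans (le_of_eq hθp.symm) (hm.monotoneOn hpq hyd hyd.1)) with h | h
            · exact h
            · exfalso
              have h' : θ p = θ (y' - 1) := by rw [hθp]; exact h
              have h2' := hinj hpq hyd h'
              have : y' = p + 1 := by linarith [h2']
              linarith
          simp only [hXi, if_neg (not_le_of_gt hgtq)]
          have hmem : θ (y' - 1) ∈ Icc q (p + 1) := by
            refine ⟨hgtq.le, ?_⟩
            have := hm.monotoneOn hyd hqq hyd.2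
            rw [hθq] at this; exact this
          rw [show θinv (θ (y' - 1)) = y' - 1 from hinvθ _ hyd]
          ring
    obtain ⟨x, hx, hXix⟩ := key
    refine ⟨x + k, ?_⟩
    rw [hSf_int x k, hSf_eq x hx, hXix, hy']
    ring
  -- assemble the OrderIso
  refine ⟨StrictMono.orderIsoOfSurjective Sf hSf_mono hSf_surj, ?_, ?_, ?_⟩
  · intro x
    rw [StrictMono.coe_orderIsoOfSurjective]
    have := hSf_int x 1
    push_cast at this
    exact this
  · -- involution property
    rw [IsInvLift]
    intro x
    rw [StrictMono.coe_orderIsoOfSurjective]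
    -- reduce to the fundamental domain
    have main : ∀ r ∈ Ico p (p + 1), Sf (Sf r) = r + 1 := by
      intro r hr
      rw [hSf_eq r hr]
      by_cases hrq : r ≤ q
      · -- Sf r = θ r
        simp only [hXi, if_pos hrq]
        have hrIcc : r ∈ Icc p q := ⟨hr.1, hrq⟩
        have hθr_mem : θ r ∈ Icc q (p + 1) := by
          constructor
          · rw [← hθp]; exact hm.monotoneOn hpq hrIcc hr.1
          · rw [← hθq]; exact hm.monotoneOn hrIcc hqq hrq
        rcases lt_or_eq_of_le hθr_mem.2 with htop | htop
        · have hθr_Ico : θ r ∈ Ico p (p + 1) := ⟨le_trans (by linarith) hθr_mem.1, htop⟩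
          rw [hSf_eq _ hθr_Ico]
          rcases eq_or_lt_of_le hr.1 with hrp | hrp
          · -- r = p
            simp only [hXi, ← hrp, hθp, if_pos (le_refl q), hθq]
          · -- r > p : θ r > q
            have hgt : q < θ r := by rw [← hθp]; exact hm hpq hrIcc hrp
            simp only [hXi, if_neg (not_le_of_gt hgt)]
            rw [hinvθ r hrIcc]
        · -- θ r = p + 1, forces r = q
          have hreq : r = q := by
            apply hinj hrIcc hqq
            rw [htop, hθq]
          rw [htop, show p + 1 = p + (1:ℤ) by norm_num, hSf_int p 1, hSf_eq p ⟨le_refl _, by linarith⟩]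
          simp only [hXi, if_pos h1.le, hθp]
          rw [hreq]; norm_num
      · -- r > q : Sf r = θinv r + 1
        push_neg at hrq
        simp only [hXi, if_neg (not_le_of_gt hrq)]
        have hrmem : r ∈ Icc q (p + 1) := ⟨hrq.le, hr.2.le⟩
        have hinvr := (hinv r hrmem).1
        rw [show θinv r + 1 = θinv r + (1:ℤ) by norm_num, hSf_int _ 1,
          hSf_eq _ ⟨hinvr.1, lt_of_le_of_lt hinvr.2 h2⟩]
        simp only [hXi, if_pos hinvr.2]
        rw [(hinv r hrmem).2]
        push_cast; ring
    -- general x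
    set n := ⌊x - p⌋ with hn
    set r := p + Int.fract (x - p) with hrdef
    have hxr : x = r + n := by
      simp only [hrdef, hn, Int.fract]; ring
    rw [hxr, hSf_int r n, show Sf r + (n:ℝ) = Sf r + (n:ℤ) by norm_num, hSf_int _ n,
      main r (hr_mem x)]
    push_cast; ring
  · intro x hx
    rw [StrictMono.coe_orderIsoOfSurjective, hSf_eq x ⟨hx.1, lt_of_le_of_lt hx.2 h2⟩]
    simp only [hXi, if_pos hx.2]


/-- Quadratic bump below/above the identity on `[p,q]`. -/
theorem bump_facts (p q κ : ℝ) (h : p < q) (hκ0 : 0 < κ) (hκ : κ * (q - p) ≤ 1/2) :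
    (StrictMonoOn (fun x => x - κ*(x-p)*(q-x)) (Icc p q)) ∧
    (∀ x ∈ Icc p q, (fun x => x - κ*(x-p)*(q-x)) x ∈ Icc p q) ∧
    ((p:ℝ) - κ*(p-p)*(q-p) = p) ∧ (q - κ*(q-p)*(q-q) = q) ∧
    (∀ x ∈ Ioo p q, x - κ*(x-p)*(q-x) < x) ∧
    (∀ x ∈ Icc p q, x - (x - κ*(x-p)*(q-x)) ≤ κ*(q-p)^2/4) := by
  refine ⟨?_, ?_, by ring, by ring, ?_, ?_⟩
  · intro x hx y hy hxy
    simp only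
    have h1 : (y - κ*(y-p)*(q-y)) - (x - κ*(x-p)*(q-x)) = (y - x) * (1 - κ*(q + p - x - y)) := by
      ring
    have h2 : κ*(q + p - x - y) ≤ κ * (q - p) := by
      have : q + p - x - y ≤ q - p := by linarith [hx.1, hy.1]
      nlinarith
    nlinarith [h1, h2, hxy]
  · intro x hx
    simp only
    constructor
    · have h1 : κ*(q-x) ≤ 1/2 := by
        have : q - x ≤ q - p := by linarith [hx.1]
        nlinarith
      nlinarith [hx.1, hx.2, h1]
    · nlinarith [hx.1, hx.2, mul_nonneg (mul_nonneg hκ0.le (sub_nonneg.mpr hx.1)) (sub_nonneg.mpr hx.2)]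
  · intro x hx
    nlinarith [mul_pos (mul_pos hκ0 (sub_pos.mpr hx.1)) (sub_pos.mpr hx.2)]
  · intro x hx
    have : (x-p)*(q-x) ≤ (q-p)^2/4 := by nlinarith [sq_nonneg (q + p - 2*x)]
    nlinarith

theorem bump_facts_up (p q κ : ℝ) (h : p < q) (hκ0 : 0 < κ) (hκ : κ * (q - p) ≤ 1/2) :
    (StrictMonoOn (fun x => x + κ*(x-p)*(q-x)) (Icc p q)) ∧
    (∀ x ∈ Icc p q, (fun x => x + κ*(x-p)*(q-x)) x ∈ Icc p q) ∧
    (∀ x ∈ Ioo p q, x < x + κ*(x-p)*(q-x)) ∧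
    (∀ x ∈ Icc p q, (x + κ*(x-p)*(q-x)) - x ≤ κ*(q-p)^2/4) := by
  refine ⟨?_, ?_, ?_, ?_⟩
  · intro x hx y hy hxy
    simp only
    have h1 : (y + κ*(y-p)*(q-y)) - (x + κ*(x-p)*(q-x)) = (y - x) * (1 + κ*(q + p - x - y)) := by
      ring
    have h2 : -(κ*(q + p - x - y)) ≤ κ * (q - p) := by
      have : -(q + p - x - y) ≤ q - p := by linarith [hx.2, hy.2]
      nlinarith
    nlinarith [h1, h2, hxy]
  · intro x hx
    simp only
    constructor
    · nlinarith [hx.1, hx.2, mul_nonneg (mul_nonneg hκ0.le (sub_nonneg.mpr hx.1)) (sub_nonneg.mpr hx.2)]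
    · have h1 : κ*(x-p) ≤ 1/2 := by
        have : x - p ≤ q - p := by linarith [hx.2]
        nlinarith
      nlinarith [hx.1, hx.2, h1]
  · intro x hx
    nlinarith [mul_pos (mul_pos hκ0 (sub_pos.mpr hx.1)) (sub_pos.mpr hx.2)]
  · intro x hx
    have : (x-p)*(q-x) ≤ (q-p)^2/4 := by nlinarith [sq_nonneg (q + p - 2*x)]
    nlinarith

/-- Corridor lemma: a strictly increasing continuous path inside an open corridor,
with prescribed endpoints on the (closed) corridor. -/
theorem corridor (s t : ℝ) (hst : s < t) (L U : ℝ → ℝ)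
    (hLc : ContinuousOn L (Icc s t)) (hUc : ContinuousOn U (Icc s t))
    (hLm : StrictMonoOn L (Icc s t)) (hUm : StrictMonoOn U (Icc s t))
    (hLU : ∀ x ∈ Icc s t, L x < U x)
    (vs vt : ℝ) (hvs : vs ∈ Icc (L s) (U s)) (hvt : vt ∈ Icc (L t) (U t)) (hv : vs < vt) :
    ∃ θ : ℝ → ℝ, ContinuousOn θ (Icc s t) ∧ StrictMonoOn θ (Icc s t) ∧ θ s = vs ∧ θ t = vt ∧
      ∀ x ∈ Ioo s t, L x < θ x ∧ θ x < U x := by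
  -- minimum gap
  obtain ⟨z, hz, hzmin⟩ := isCompact_Icc.exists_isMinOn (α := ℝ) (nonempty_Icc.mpr hst.le)
    (hUc.sub hLc)
  set μ := U z - L z with hμdef
  have hμ0 : 0 < μ := sub_pos.mpr (hLU z hz)
  have hμ : ∀ x ∈ Icc s t, μ ≤ U x - L x := fun x hx => hzmin hx
  -- uniform continuity of U
  have huc : UniformContinuousOn U (Icc s t) :=
    isCompact_Icc.uniformContinuousOn_of_continuous hUc
  rw [Metric.uniformContinuousOn_iff] at huc
  obtain ⟨δ, hδ0, hδ⟩ := huc (μ/2) (by linarith)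
  -- bump amplitude
  set κ := min (1/(2*(t-s))) (2*δ/((t-s)^2)) with hκdef
  have hts : 0 < t - s := by linarith
  have hκ0 : 0 < κ := lt_min (by positivity) (by positivity)
  have hκ1 : κ * (t - s) ≤ 1/2 := by
    have hle : κ ≤ 1/(2*(t-s)) := min_le_left _ _
    have h2' : (1/(2*(t-s))) * (t-s) = 1/2 := by field_simp
    nlinarith [mul_le_mul_of_nonneg_right hle hts.le]
  have hκ2 : κ * (t-s)^2/4 < δ := by
    have h' : κ ≤ 2*δ/((t-s)^2) := min_le_right _ _
    have h2' : κ * (t-s)^2 ≤ 2*δ := (le_div_iff₀ (by positivity)).mp h'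
    linarith
  obtain ⟨hφm, hφmaps, hφp, hφq, hφlt, hφdev⟩ := bump_facts s t κ hst hκ0 hκ1
  obtain ⟨hψm, hψmaps, hψlt, hψdev⟩ := bump_facts_up s t κ hst hκ0 hκ1
  set φ : ℝ → ℝ := fun x => x - κ*(x-s)*(t-x) with hφdef
  set ψ : ℝ → ℝ := fun x => x + κ*(x-s)*(t-x) with hψdef
  set l : ℝ → ℝ := fun x => vs + (x - s) * ((vt - vs)/(t - s)) with hldef
  have hlm : StrictMono l := by
    intro x y hxy
    simp only [hldef]
    have hc : 0 < (vt - vs)/(t-s) := div_pos (by linarith) hts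
    nlinarith [mul_pos (show (0:ℝ) < y - x by linarith) hc]
  have hlc : Continuous l := by fun_prop
  have hφc : Continuous φ := by simp only [hφdef]; fun_prop
  have hψc : Continuous ψ := by simp only [hψdef]; fun_prop
  set θ : ℝ → ℝ := fun x => min (U (φ x)) (max (L (ψ x)) (l x)) with hθdef
  have hUφc : ContinuousOn (fun x => U (φ x)) (Icc s t) :=
    hUc.comp hφc.continuousOn (fun x hx => hφmaps x hx)
  have hLψc : ContinuousOn (fun x => L (ψ x)) (Icc s t) :=
    hLc.comp hψc.continuousOn (fun x hx => hψmaps x hx)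
  have hUφm : StrictMonoOn (fun x => U (φ x)) (Icc s t) :=
    hUm.comp hφm (fun x hx => hφmaps x hx)
  have hLψm : StrictMonoOn (fun x => L (ψ x)) (Icc s t) :=
    hLm.comp hψm (fun x hx => hψmaps x hx)
  have hφs : φ s = s := by simp only [hφdef]; ring
  have hφt : φ t = t := by simp only [hφdef]; ring
  have hψs : ψ s = s := by simp only [hψdef]; ring
  have hψt : ψ t = t := by simp only [hψdef]; ring
  refine ⟨θ, ?_, ?_, ?_, ?_, ?_⟩
  · exact continuous_min.comp_continuousOn
      (hUφc.prodMk (continuous_max.comp_continuousOn ((hLψc.prodMk hlc.continuousOn))))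
  · intro x hx y hy hxy
    simp only [hθdef]
    have h1 := hUφm hx hy hxy
    have h2 := hLψm hx hy hxy
    have h3 := hlm hxy
    rcases min_cases (U (φ y)) (max (L (ψ y)) (l y)) with ⟨he, _⟩ | ⟨he, _⟩
    · rw [he]; exact lt_of_le_of_lt (min_le_left _ _) h1
    · rw [he]
      apply lt_of_le_of_lt (min_le_right _ _)
      rcases max_cases (L (ψ x)) (l x) with ⟨he2, _⟩ | ⟨he2, _⟩
      · rw [he2]; exact lt_of_lt_of_le h2 (le_max_left _ _)
      · rw [he2]; exact lt_of_lt_of_le h3 (le_max_right _ _)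
  · simp only [hθdef, hφs, hψs, hldef]
    rw [show vs + (s - s) * ((vt - vs)/(t-s)) = vs by ring]
    rw [max_eq_right hvs.1, min_eq_right hvs.2]
  · simp only [hθdef, hφt, hψt, hldef]
    rw [show vs + (t - s) * ((vt - vs)/(t-s)) = vt by field_simp; ring]
    rw [max_eq_right hvt.1, min_eq_right hvt.2]
  · intro x hx
    have hxI : x ∈ Icc s t := ⟨hx.1.le, hx.2.le⟩
    constructor
    · -- L x < θ x
      apply lt_min
      · -- L x < U (φ x) by uniform continuity
        have hd : dist (φ x) x < δ := by
          rw [Real.dist_eq]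
          have h1 := hφdev x hxI
          simp only [hφdef]
          have hnn : (0:ℝ) ≤ κ * (x - s) * (t - x) :=
            mul_nonneg (mul_nonneg hκ0.le (by linarith [hxI.1])) (by linarith [hxI.2])
          rw [abs_sub_comm, show x - (x - κ*(x-s)*(t-x)) = κ*(x-s)*(t-x) by ring,
            abs_of_nonneg hnn]
          have h1' : κ*(x-s)*(t-x) ≤ κ * (t-s)^2/4 := by
            have := hφdev x hxI
            linarith [this]
          linarith [hκ2]
        have := hδ (φ x) (hφmaps x hxI) x hxI hd
        rw [Real.dist_eq] at this
        have habs := abs_lt.mp this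
        have := hμ x hxI
        linarith [habs.1, habs.2]
      · apply lt_max_of_lt_left
        exact hLm hxI (hψmaps x hxI) (hψlt x hx)
    · exact lt_of_le_of_lt (min_le_left _ _) (hUm (hφmaps x hxI) hxI (hφlt x hx))


/-- Integer iteration of an order isomorphism of `ℝ`. -/
def zit (G : ℝ ≃o ℝ) (n : ℤ) : ℝ → ℝ := ⇑(G.toEquiv ^ n)

namespace zit

variable (G : ℝ ≃o ℝ)

theorem zero (x : ℝ) : zit G 0 x = x := rfl

theorem add (m n : ℤ) (x : ℝ) : zit G (m + n) x = zit G m (zit G n x) := by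
  simp only [zit, zpow_add, Equiv.Perm.mul_apply]

theorem one (x : ℝ) : zit G 1 x = G x := by
  simp only [zit, zpow_one]; rfl

theorem neg_one (x : ℝ) : zit G (-1) x = G.symm x := by
  simp only [zit, zpow_neg, zpow_one]; rfl

theorem succ (n : ℤ) (x : ℝ) : zit G (n + 1) x = G (zit G n x) := by
  rw [show n + 1 = 1 + n by ring, add, one]

theorem pred (n : ℤ) (x : ℝ) : zit G (n - 1) x = G.symm (zit G n x) := by
  rw [show n - 1 = -1 + n by ring, add, neg_one]

theorem cancel (n : ℤ) (x : ℝ) : zit G (-n) (zit G n x) = x := by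
  rw [← add, neg_add_cancel, zero]

theorem mono (n : ℤ) : StrictMono (zit G n) := by
  induction n using Int.induction_on with
  | zero => intro x y h; simpa only [zero] using h
  | succ k ih =>
      intro x y h
      rw [succ, succ]
      exact G.strictMono (ih h)
  | pred k ih =>
      intro x y h
      rw [show -(k:ℤ) - 1 = (-(k:ℤ)) - 1 from rfl, pred, pred]
      exact G.symm.strictMono (ih h)

theorem symm_eq (n : ℤ) (x : ℝ) : zit G.symm n x = zit G (-n) x := by
  induction n using Int.induction_on with
  | zero => rw [zero, neg_zero, zero]
  | succ k ih =>
      rw [succ, ih, show -((k:ℤ)+1) = -(k:ℤ) - 1 by ring, pred]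
  | pred k ih =>
      rw [pred, ih, show -(-(k:ℤ) - 1) = -(-(k:ℤ)) + 1 by ring, succ]
      rfl

theorem comm_symm (n : ℤ) (x : ℝ) : zit G n (G.symm x) = G.symm (zit G n x) := by
  have h : zit G n (zit G (-1) x) = zit G (-1) (zit G n x) := by
    rw [← zit.add, ← zit.add, add_comm]
  rw [zit.neg_one, zit.neg_one] at h
  exact h

theorem mem (c d : ℝ) (hmem : ∀ x ∈ Ioo c d, G x ∈ Ioo c d)
    (hmem' : ∀ x ∈ Ioo c d, G.symm x ∈ Ioo c d) (n : ℤ) (x : ℝ) (hx : x ∈ Ioo c d) :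
    zit G n x ∈ Ioo c d := by
  induction n using Int.induction_on with
  | zero => rw [zero]; exact hx
  | succ k ih => rw [succ]; exact hmem _ ih
  | pred k ih => rw [show -(k:ℤ) - 1 = (-(k:ℤ)) - 1 from rfl, pred]; exact hmem' _ ih

end zit

/-- Index monotonicity of the forward orbit on an interval where `G > id`. -/
theorem zit_idx_mono (G : ℝ ≃o ℝ) (c d : ℝ)
    (hup : ∀ x ∈ Ioo c d, x < G x)
    (hmem : ∀ x ∈ Ioo c d, G x ∈ Ioo c d) (hmem' : ∀ x ∈ Ioo c d, G.symm x ∈ Ioo c d)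
    (x₀ : ℝ) (hx₀ : x₀ ∈ Ioo c d) :
    StrictMono (fun n : ℤ => zit G n x₀) := by
  have step : ∀ n : ℤ, zit G n x₀ < zit G (n + 1) x₀ := by
    intro n
    rw [zit.succ]
    exact hup _ (zit.mem G c d hmem hmem' n x₀ hx₀)
  exact strictMono_int_of_lt_succ step

/-- The orbit ladder: existence of a greatest index `n` with `Gⁿ x₀ ≤ x`. -/
theorem ladder (G : ℝ ≃o ℝ) (c d : ℝ) (hcd : c < d)
    (hup : ∀ x ∈ Ioo c d, x < G x)
    (hmem : ∀ x ∈ Ioo c d, G x ∈ Ioo c d) (hmem' : ∀ x ∈ Ioo c d, G.symm x ∈ Ioo c d)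
    (x₀ x : ℝ) (hx₀ : x₀ ∈ Ioo c d) (hx : x ∈ Ioo c d) :
    ∃ n : ℤ, (zit G n x₀ ≤ x ∧ x < zit G (n + 1) x₀) ∧
      ∀ m : ℤ, zit G m x₀ ≤ x → m ≤ n := by
  have hdown : ∀ y ∈ Ioo c d, G.symm y < y := by
    intro y hy
    have h1 := hmem' y hy
    have h2 := hup _ h1
    rwa [G.apply_symm_apply] at h2
  -- existence of a small enough index
  have hlow : ∃ k : ℕ, zit G (-(k:ℤ)) x₀ ≤ x := by
    by_contra h
    push_neg at h
    set v : ℕ → ℝ := fun k => zit G (-(k:ℤ)) x₀ with hv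
    have hvmem : ∀ k, v k ∈ Ioo c d := fun k => zit.mem G c d hmem hmem' _ _ hx₀
    have hvstep : ∀ k, v (k + 1) = G.symm (v k) := by
      intro k
      simp only [hv]
      have hcast : (-(((k+1):ℕ) : ℤ)) = -(k:ℤ) - 1 := by push_cast; ring
      rw [hcast, zit.pred]
    have hvanti : ∀ k, v (k+1) < v k := fun k => by
      rw [hvstep]; exact hdown _ (hvmem k)
    have hAnti : Antitone v := antitone_nat_of_succ_le (fun k => (hvanti k).le)
    have hbdd : BddBelow (range v) := ⟨x, by rintro _ ⟨k, rfl⟩; exact (h k).le⟩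
    have htend : Filter.Tendsto v Filter.atTop (nhds (⨅ k, v k)) :=
      tendsto_atTop_ciInf hAnti hbdd
    set L := ⨅ k, v k with hL
    have hL1 : G.symm L = L := by
      have t1 : Filter.Tendsto (fun k => v (k + 1)) Filter.atTop (nhds L) :=
        htend.comp (Filter.tendsto_add_atTop_nat 1)
      have t2 : Filter.Tendsto (fun k => G.symm (v k)) Filter.atTop (nhds (G.symm L)) :=
        (G.symm.continuous.tendsto L).comp htend
      have : (fun k => v (k+1)) = fun k => G.symm (v k) := funext hvstep
      rw [this] at t1
      exact tendsto_nhds_unique t2 t1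
    have hLmem : L ∈ Ioo c d := by
      constructor
      · have : x ≤ L := le_ciInf (fun k => (h k).le)
        exact lt_of_lt_of_le hx.1 this
      · have : L ≤ v 0 := ciInf_le hbdd 0
        have hv0 : v 0 = x₀ := by simp [hv, zit.zero]
        rw [hv0] at this
        exact lt_of_le_of_lt this hx₀.2
    have := hdown L hLmem
    rw [hL1] at this
    exact lt_irrefl _ this
  -- existence of a large index
  have hhigh : ∃ k : ℕ, x < zit G (k:ℤ) x₀ := by
    by_contra h
    push_neg at h
    set v : ℕ → ℝ := fun k => zit G (k:ℤ) x₀ with hv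
    have hvmem : ∀ k, v k ∈ Ioo c d := fun k => zit.mem G c d hmem hmem' _ _ hx₀
    have hvstep : ∀ k, v (k + 1) = G (v k) := by
      intro k
      simp only [hv]
      have hcast : ((((k+1):ℕ)) : ℤ) = (k:ℤ) + 1 := by push_cast; ring
      rw [hcast, zit.succ]
    have hvmono : ∀ k, v k < v (k+1) := fun k => by
      rw [hvstep]; exact hup _ (hvmem k)
    have hMono : Monotone v := monotone_nat_of_le_succ (fun k => (hvmono k).le)
    have hbdd : BddAbove (range v) := ⟨x, by rintro _ ⟨k, rfl⟩; exact h k⟩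
    have htend : Filter.Tendsto v Filter.atTop (nhds (⨆ k, v k)) :=
      tendsto_atTop_ciSup hMono hbdd
    set L := ⨆ k, v k with hL
    have hL1 : G L = L := by
      have t1 : Filter.Tendsto (fun k => v (k + 1)) Filter.atTop (nhds L) :=
        htend.comp (Filter.tendsto_add_atTop_nat 1)
      have t2 : Filter.Tendsto (fun k => G (v k)) Filter.atTop (nhds (G L)) :=
        (G.continuous.tendsto L).comp htend
      have : (fun k => v (k+1)) = fun k => G (v k) := funext hvstep
      rw [this] at t1
      exact tendsto_nhds_unique t2 t1
    have hLmem : L ∈ Ioo c d := by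
      constructor
      · have : v 0 ≤ L := le_ciSup hbdd 0
        have hv0 : v 0 = x₀ := by simp [hv, zit.zero]
        rw [hv0] at this
        exact lt_of_lt_of_le hx₀.1 this
      · have : L ≤ x := ciSup_le (fun k => h k)
        exact lt_of_le_of_lt this hx.2
    have := hup L hLmem
    rw [hL1] at this
    exact lt_irrefl _ this
  obtain ⟨k₁, hk₁⟩ := hlow
  obtain ⟨k₂, hk₂⟩ := hhigh
  have hidx := zit_idx_mono G c d hup hmem hmem' x₀ hx₀
  have hbdd : ∃ b : ℤ, ∀ z : ℤ, zit G z x₀ ≤ x → z ≤ b := by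
    refine ⟨k₂, fun z hz => ?_⟩
    by_contra hzk
    push_neg at hzk
    have : zit G (k₂:ℤ) x₀ ≤ zit G z x₀ := (hidx.monotone hzk.le)
    linarith [hk₂]
  obtain ⟨n, hn1, hn2⟩ := Int.exists_greatest_of_bdd hbdd ⟨-(k₁:ℤ), hk₁⟩
  refine ⟨n, ⟨hn1, ?_⟩, hn2⟩
  by_contra hc
  push_neg at hc
  have := hn2 (n+1) hc
  linarith

theorem conj_invol (G : ℝ ≃o ℝ) (hG1 : LiftIso G) (a b : ℝ) (hab : a < b) (hba : b < a + 1)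
    (hGa : G a = a) (hGb : G b = b)
    (hplus : ∀ x, a < x → x < b → x < G x)
    (hminus : ∀ x, b < x → x < a + 1 → G x < x) :
    ∃ S : ℝ ≃o ℝ, LiftIso S ∧ IsInvLift S 1 ∧ ∀ x, S (G x) = G.symm (S x) := by
  have hGa1 : G (a + 1) = a + 1 := by rw [hG1 a, hGa]
  have hsa : G.symm a = a := G.symm_apply_eq.mpr hGa.symm
  have hsb : G.symm b = b := G.symm_apply_eq.mpr hGb.symm
  have hsa1 : G.symm (a+1) = a + 1 := G.symm_apply_eq.mpr hGa1.symm
  have hm1 : ∀ x ∈ Ioo a b, G x ∈ Ioo a b := by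
    intro x hx
    exact ⟨by rw [← hGa]; exact G.strictMono hx.1, by rw [← hGb]; exact G.strictMono hx.2⟩
  have hm1' : ∀ x ∈ Ioo a b, G.symm x ∈ Ioo a b := by
    intro x hx
    exact ⟨by rw [← hsa]; exact G.symm.strictMono hx.1, by rw [← hsb]; exact G.symm.strictMono hx.2⟩
  have hup1 : ∀ x ∈ Ioo a b, x < G x := fun x hx => hplus x hx.1 hx.2
  have hm2 : ∀ x ∈ Ioo b (a+1), G x ∈ Ioo b (a+1) := by
    intro x hx
    exact ⟨by rw [← hGb]; exact G.strictMono hx.1, by rw [← hGa1]; exact G.strictMono hx.2⟩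
  have hm2' : ∀ x ∈ Ioo b (a+1), G.symm x ∈ Ioo b (a+1) := by
    intro x hx
    exact ⟨by rw [← hsb]; exact G.symm.strictMono hx.1, by rw [← hsa1]; exact G.symm.strictMono hx.2⟩
  have hup2 : ∀ x ∈ Ioo b (a+1), x < G.symm x := by
    intro x hx
    have h1 := hm2' x hx
    have h2 := hminus _ h1.1 h1.2
    rwa [G.apply_symm_apply] at h2
  have hm2'' : ∀ x ∈ Ioo b (a+1), G.symm.symm x ∈ Ioo b (a+1) := by
    intro x hx; rw [OrderIso.symm_symm]; exact hm2 x hx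
  set x₀ : ℝ := (a + b)/2 with hx₀def
  set y₀ : ℝ := (b + (a+1))/2 with hy₀def
  have hx₀ : x₀ ∈ Ioo a b := ⟨by simp only [hx₀def]; linarith, by simp only [hx₀def]; linarith⟩
  have hy₀ : y₀ ∈ Ioo b (a+1) := ⟨by simp only [hy₀def]; linarith, by simp only [hy₀def]; linarith⟩
  have hGx₀ : x₀ < G x₀ := hup1 _ hx₀
  have hGy₀ : y₀ < G.symm y₀ := hup2 _ hy₀
  have hGx₀mem : G x₀ ∈ Ioo a b := hm1 _ hx₀
  have hGy₀mem : G.symm y₀ ∈ Ioo b (a+1) := hm2' _ hy₀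
  set r : ℝ := (G.symm y₀ - y₀)/(G x₀ - x₀) with hrdef
  have hr0 : 0 < r := div_pos (by linarith) (by linarith)
  set W0 : ℝ → ℝ := fun t => y₀ + (t - x₀) * r with hW0def
  have hW0x₀ : W0 x₀ = y₀ := by simp only [hW0def]; ring
  have hW0G : W0 (G x₀) = G.symm y₀ := by
    have hne : G x₀ - x₀ ≠ 0 := ne_of_gt (by linarith)
    have key : (G x₀ - x₀) * ((G.symm y₀ - y₀) / (G x₀ - x₀)) = G.symm y₀ - y₀ := by
      rw [mul_comm]; exact div_mul_cancel₀ _ hne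
    simp only [hW0def, hrdef]
    rw [key]; ring
  have hW0m : StrictMono W0 := by
    intro u v huv
    simp only [hW0def]
    nlinarith [mul_pos (show (0:ℝ) < v - u by linarith) hr0]
  -- index selection on (a,b)
  have hlad : ∀ x, x ∈ Ioo a b → ∃ n : ℤ, (zit G n x₀ ≤ x ∧ x < zit G (n + 1) x₀) ∧
      ∀ m : ℤ, zit G m x₀ ≤ x → m ≤ n := fun x hx =>
    ladder G a b hab hup1 hm1 hm1' x₀ x hx₀ hx
  set nsel : ℝ → ℤ := fun x => if hx : x ∈ Ioo a b then (hlad x hx).choose else 0 with hnsel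
  have nspec : ∀ x (hx : x ∈ Ioo a b),
      (zit G (nsel x) x₀ ≤ x ∧ x < zit G (nsel x + 1) x₀) ∧
      ∀ m : ℤ, zit G m x₀ ≤ x → m ≤ nsel x := by
    intro x hx
    simp only [hnsel, dif_pos hx]
    exact (hlad x hx).choose_spec
  have hidx : StrictMono (fun n : ℤ => zit G n x₀) :=
    zit_idx_mono G a b hup1 hm1 hm1' x₀ hx₀
  have nchar : ∀ x (hx : x ∈ Ioo a b) (m : ℤ),
      zit G m x₀ ≤ x → x < zit G (m + 1) x₀ → nsel x = m := by
    intro x hx m h1 h2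
    have hle : m ≤ nsel x := (nspec x hx).2 m h1
    rcases lt_or_eq_of_le hle with h | h
    · exfalso
      have : m + 1 ≤ nsel x := h
      have := hidx.monotone this
      have := le_trans this ((nspec x hx).1.1)
      linarith [h2, this]
    · exact h.symm
  have cancel' : ∀ (n : ℤ) (x : ℝ), zit G n (zit G (-n) x) = x := by
    intro n x
    have := zit.cancel G (-n) x
    rwa [neg_neg] at this
  have tmem : ∀ x (hx : x ∈ Ioo a b), zit G (-(nsel x)) x ∈ Ico x₀ (G x₀) := by
    intro x hx
    constructor
    · have h1 := (nspec x hx).1.1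
      have := (zit.mono G (-(nsel x))).monotone h1
      rwa [zit.cancel] at this
    · have h2 := (nspec x hx).1.2
      have := (zit.mono G (-(nsel x))) h2
      rw [← zit.add] at this
      rw [show -(nsel x) + (nsel x + 1) = 1 by ring, zit.one] at this
      exact this
  -- the half-conjugacy W
  set W : ℝ → ℝ := fun x => if hx : x ∈ Ioo a b
    then zit G (-(nsel x)) (W0 (zit G (-(nsel x)) x)) else (if x ≤ a then b else a+1)
    with hWdef
  have Weq : ∀ x (hx : x ∈ Ioo a b), W x = zit G (-(nsel x)) (W0 (zit G (-(nsel x)) x)) := by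
    intro x hx; simp only [hWdef, dif_pos hx]
  have Wa : W a = b := by
    simp only [hWdef]
    rw [dif_neg (by simp [lt_irrefl]), if_pos (le_refl a)]
  have Wb : W b = a + 1 := by
    simp only [hWdef]
    rw [dif_neg (by simp [lt_irrefl]), if_neg (by linarith)]
  have Wmem : ∀ x (hx : x ∈ Ioo a b), W x ∈ Ioo b (a+1) := by
    intro x hx
    rw [Weq x hx]
    have ht := tmem x hx
    have hz : W0 (zit G (-(nsel x)) x) ∈ Ioo b (a+1) := by
      constructor
      · have : y₀ ≤ W0 (zit G (-(nsel x)) x) := by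
          rw [← hW0x₀]; exact hW0m.monotone ht.1
        linarith [hy₀.1]
      · have : W0 (zit G (-(nsel x)) x) < G.symm y₀ := by
          rw [← hW0G]; exact hW0m ht.2
        linarith [hGy₀mem.2]
    exact zit.mem G b (a+1) hm2 hm2' _ _ hz
  -- monotonicity of the index `m ↦ G^{-m} y₀`
  have hymono : StrictMono (fun m : ℤ => zit G (-m) y₀) := by
    have h := zit_idx_mono G.symm b (a+1) hup2 hm2' hm2'' y₀ hy₀
    intro m n hmn
    have := h hmn
    simp only [zit.symm_eq] at this
    exact this
  have idx2 : ∀ (m : ℤ) (y : ℝ), zit G (-(m+1)) y = G.symm (zit G (-m) y) := by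
    intro m y
    rw [show -(m+1) = (-m) - 1 by ring, zit.pred]
  have Wmono : StrictMonoOn W (Icc a b) := by
    rintro x hx y hy hxy
    rcases eq_or_lt_of_le hx.1 with hxa | hxa
    · -- x = a
      rw [← hxa, Wa]
      rcases eq_or_lt_of_le hy.2 with hyb | hyb
      · rw [hyb, Wb]; linarith
      · exact (Wmem y ⟨by rw [← hxa] at hxy; exact hxy, hyb⟩).1
    · rcases eq_or_lt_of_le hy.2 with hyb | hyb
      · rw [hyb, Wb]
        exact (Wmem x ⟨hxa, by rw [← hyb]; exact hxy⟩).2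
      · -- both interior
        have hxI : x ∈ Ioo a b := ⟨hxa, lt_trans hxy hyb⟩
        have hyI : y ∈ Ioo a b := ⟨lt_trans hxa hxy, hyb⟩
        have hnxy : nsel x ≤ nsel y :=
          (nspec y hyI).2 _ (le_trans (nspec x hxI).1.1 hxy.le)
        rw [Weq x hxI, Weq y hyI]
        rcases eq_or_lt_of_le hnxy with heq | hlt
        · rw [← heq]
          exact (zit.mono G _) (hW0m ((zit.mono G _) hxy))
        · calc zit G (-(nsel x)) (W0 (zit G (-(nsel x)) x))
              < zit G (-(nsel x)) (W0 (G x₀)) :=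
                (zit.mono G _) (hW0m (tmem x hxI).2)
          _ = zit G (-(nsel x + 1)) y₀ := by rw [hW0G, idx2]; exact zit.comm_symm G _ _
          _ ≤ zit G (-(nsel y)) y₀ := by
                apply hymono.monotone
                omega
          _ ≤ zit G (-(nsel y)) (W0 (zit G (-(nsel y)) y)) := by
                apply (zit.mono G _).monotone
                rw [← hW0x₀]
                exact hW0m.monotone (tmem y hyI).1
  have Wsurj : SurjOn W (Icc a b) (Icc b (a+1)) := by
    intro y hy
    rcases eq_or_lt_of_le hy.1 with h1 | h1
    · exact ⟨a, ⟨le_refl a, hab.le⟩, by rw [Wa, h1]⟩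
    · rcases eq_or_lt_of_le hy.2 with h2 | h2
      · exact ⟨b, ⟨hab.le, le_refl b⟩, by rw [Wb, h2]⟩
      · have hyI : y ∈ Ioo b (a+1) := ⟨h1, h2⟩
        obtain ⟨m, ⟨u1, u2⟩, _⟩ := ladder G.symm b (a+1) (by linarith) hup2 hm2' hm2'' y₀ y hy₀ hyI
        rw [zit.symm_eq] at u1 u2
        -- z := G^m y ∈ [y₀, G.symm y₀)
        set z : ℝ := zit G m y with hzdef
        have hz1 : y₀ ≤ z := by
          have := (zit.mono G m).monotone u1
          rwa [cancel' m y₀] at this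
        have hz2 : z < G.symm y₀ := by
          have := (zit.mono G m) u2
          rw [← zit.add, show m + -(m+1) = -1 by ring, zit.neg_one] at this
          exact this
        set t : ℝ := x₀ + (z - y₀)/r with htdef
        have hW0t : W0 t = z := by
          simp only [hW0def, htdef]
          field_simp
          ring
        have ht : t ∈ Ico x₀ (G x₀) := by
          constructor
          · simp only [htdef]
            have : 0 ≤ (z - y₀)/r := div_nonneg (by linarith) hr0.le
            linarith
          · simp only [htdef]
            have hlt : (z - y₀)/r < G x₀ - x₀ := by
              rw [div_lt_iff₀ hr0, hrdef]
              have hne : G x₀ - x₀ ≠ 0 := by linarith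
              field_simp
              linarith
            linarith
        have htI : t ∈ Ioo a b := ⟨lt_of_lt_of_le hx₀.1 ht.1, lt_of_lt_of_le ht.2 hGx₀mem.2.le⟩
        set x : ℝ := zit G m t with hxdef
        have hxI : x ∈ Ioo a b := zit.mem G a b hm1 hm1' m t htI
        have hns : nsel x = m := by
          apply nchar x hxI
          · simp only [hxdef]
            exact (zit.mono G m).monotone ht.1
          · simp only [hxdef]
            have := (zit.mono G m) ht.2
            rw [show G x₀ = zit G 1 x₀ from (zit.one G x₀).symm, ← zit.add] at this
            rwa [show m + 1 = m + 1 from rfl] at this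
        refine ⟨x, ⟨hxI.1.le, hxI.2.le⟩, ?_⟩
        rw [Weq x hxI, hns]
        simp only [hxdef]
        rw [zit.cancel, hW0t, hzdef, zit.cancel]
  -- glue into an involution lift
  obtain ⟨S, hS1, hS2, hSW⟩ := glue_invol a b hab hba W Wmono Wsurj Wa Wb
  -- conjugacy on [a,b]
  have P : ∀ x ∈ Icc a b, W (G x) = G.symm (W x) := by
    intro x hx
    rcases eq_or_lt_of_le hx.1 with hxa | hxa
    · rw [← hxa, hGa, Wa, hsb]
    · rcases eq_or_lt_of_le hx.2 with hxb | hxb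
      · rw [hxb, hGb, Wb, hsa1]
      · have hxI : x ∈ Ioo a b := ⟨hxa, hxb⟩
        have hGxI : G x ∈ Ioo a b := hm1 x hxI
        have hnG : nsel (G x) = nsel x + 1 := by
          apply nchar _ hGxI
          · rw [zit.succ]
            exact G.strictMono.monotone (nspec x hxI).1.1
          · rw [show nsel x + 1 + 1 = (nsel x + 1) + 1 from rfl, zit.succ]
            exact G.strictMono (nspec x hxI).1.2
        rw [Weq _ hGxI, Weq _ hxI, hnG]
        have harg : zit G (-(nsel x + 1)) (G x) = zit G (-(nsel x)) x := by
          rw [show G x = zit G 1 x from (zit.one G x).symm, ← zit.add]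
          congr 1
          ring
        rw [harg, idx2]
  -- conjugacy for S on [a, b]
  have Q1 : ∀ x ∈ Icc a b, S (G x) = G.symm (S x) := by
    intro x hx
    have hGx : G x ∈ Icc a b := by
      constructor
      · rw [← hGa]; exact G.strictMono.monotone hx.1
      · rw [← hGb]; exact G.strictMono.monotone hx.2
    rw [hSW _ hGx, hSW _ hx, P x hx]
  -- conjugacy for S on [b, a+1]
  have Q2 : ∀ x ∈ Icc b (a+1), S (G x) = G.symm (S x) := by
    intro x hx
    obtain ⟨w, hw, hWw⟩ := Wsurj hx
    have hsymmw : G.symm w ∈ Icc a b := by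
      constructor
      · rw [← hsa]; exact G.symm.strictMono.monotone hw.1
      · rw [← hsb]; exact G.symm.strictMono.monotone hw.2
    have hGx : G x = W (G.symm w) := by
      have h0 := P (G.symm w) hsymmw
      rw [G.apply_symm_apply] at h0
      -- h0 : W w = G.symm (W (G.symm w))
      have h2 := congrArg G h0
      rw [G.apply_symm_apply] at h2
      rw [hWw] at h2
      exact h2
    have hSx : S x = w + 1 := by
      rw [← hWw, ← hSW w hw, hS2 w]
      norm_num
    have hsm := hG1.symm_map_int 1 w
    push_cast at hsm
    rw [hGx, ← hSW _ hsymmw, hS2, hSx, hsm]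
    push_cast
    ring
  have QIcc : ∀ x ∈ Icc a (a+1), S (G x) = G.symm (S x) := by
    intro x hx
    by_cases h : x ≤ b
    · exact Q1 x ⟨hx.1, h⟩
    · push_neg at h
      exact Q2 x ⟨h.le, hx.2⟩
  refine ⟨S, hS1, hS2, ?_⟩
  intro x
  set n : ℤ := ⌊x - a⌋ with hn
  set x' : ℝ := a + Int.fract (x - a) with hx'
  have hxeq : x = x' + n := by
    simp only [hx', hn, Int.fract]; ring
  have hx'mem : x' ∈ Icc a (a+1) := by
    constructor
    · simp only [hx']; linarith [Int.fract_nonneg (x - a)]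
    · simp only [hx']; linarith [Int.fract_lt_one (x - a)]
  rw [hxeq, hG1.map_int n x', hS1.map_int n (G x'), QIcc x' hx'mem, hS1.map_int n x',
    hG1.symm_map_int n (S x')]

/-- From an involution lift crossing `F` correctly, conclude `RealTriple F`. -/
theorem assemble (F Sg : ℝ ≃o ℝ) (hF1 : LiftIso F) (hSg1 : LiftIso Sg) (hSg2 : IsInvLift Sg 1)
    (a b : ℝ) (hab : a < b) (hba : b < a + 1)
    (hGa : Sg (F a) = a + 1) (hGb : Sg (F b) = b + 1)
    (hplus : ∀ x, a < x → x < b → x + 1 < Sg (F x))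
    (hminus : ∀ x, b < x → x < a + 1 → Sg (F x) < x + 1) :
    RealTriple F := by
  set G : ℝ ≃o ℝ := (F.trans Sg).trans (OrderIso.addRight (-1 : ℝ)) with hGdef
  have hGapp : ∀ x, G x = Sg (F x) + (-1) := fun x => rfl
  have hG1 : LiftIso G := by
    intro x
    rw [hGapp, hGapp, hF1 x, hSg1 (F x)]
    ring
  have hGa' : G a = a := by rw [hGapp, hGa]; ring
  have hGb' : G b = b := by rw [hGapp, hGb]; ring
  have hplus' : ∀ x, a < x → x < b → x < G x := by
    intro x h1 h2; rw [hGapp]; linarith [hplus x h1 h2]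
  have hminus' : ∀ x, b < x → x < a + 1 → G x < x := by
    intro x h1 h2; rw [hGapp]; linarith [hminus x h1 h2]
  obtain ⟨S2, hS21, hS22, hS2c⟩ := conj_invol G hG1 a b hab hba hGa' hGb' hplus' hminus'
  refine ⟨Sg, S2, G.trans S2, 1, 1, 1, 1, hSg1, hSg2, hS21, hS22,
    liftIso_trans hG1 hS21, ?_, ?_⟩
  · -- (S2 ∘ G) is an involution lift
    intro x
    simp only [OrderIso.trans_apply]
    have h1 := hS2c (S2 (G x))
    rw [h1, hS22 (G x)]
    push_cast
    have h2 := (hG1.symm).map_int 1 (G x)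
    push_cast at h2
    rw [h2, G.symm_apply_apply]
  · intro x
    simp only [OrderIso.trans_apply]
    rw [hS22 (G x)]
    push_cast
    have h3 : G x + 1 = Sg (F x) := by rw [hGapp]; ring
    rw [h3, hSg2 (F x)]
    push_cast
    ring

theorem caseA (F : ℝ ≃o ℝ) (hF1 : LiftIso F) (k : ℤ) (hk : ∀ x, F (F x) = x + k) :
    RealTriple F :=
  ⟨F, OrderIso.refl ℝ, OrderIso.refl ℝ, k, 0, 0, 0, hF1, hk, liftIso_refl, isInvLift_refl,
    liftIso_refl, isInvLift_refl, fun x => by simp [OrderIso.refl_apply]⟩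

/-- Helper: strict monotonicity of a pointwise min of strictly monotone functions. -/
theorem strictMono_min {f g : ℝ → ℝ} (hf : StrictMono f) (hg : StrictMono g) :
    StrictMono (fun x => min (f x) (g x)) := by
  intro x y hxy
  simp only
  rcases min_cases (f y) (g y) with ⟨he, _⟩ | ⟨he, _⟩
  · rw [he]; exact lt_of_le_of_lt (min_le_left _ _) (hf hxy)
  · rw [he]; exact lt_of_le_of_lt (min_le_right _ _) (hg hxy)

/-- Case B: `f` has a point of period two. -/
theorem caseB (F : ℝ ≃o ℝ) (hF1 : LiftIso F) (p q : ℝ) (hpq : p < q) (hq1 : q < p + 1)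
    (hFp : F p = q) (hFq : F q = p + 1) : RealTriple F := by
  have hsymq : F.symm q = p := F.symm_apply_eq.mpr hFp.symm
  have hsymp1 : F.symm (p+1) = q := F.symm_apply_eq.mpr hFq.symm
  have hsymp : F.symm p = q - 1 := by
    have := (hF1.symm).map_int 1 p
    push_cast at this
    have h2 : F.symm (p + 1) = F.symm p + 1 := this
    rw [hsymp1] at h2
    linarith
  set m : ℝ → ℝ := fun x => min (F x) (F.symm x + 1) with hmdef
  have hmmono : StrictMono m :=
    strictMono_min F.strictMono (fun x y h => by simpa using F.symm.strictMono h)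
  have hmp : m p = q := by
    simp only [hmdef, hFp, hsymp]
    rw [show q - 1 + 1 = q by ring, min_self]
  have hmq : m q = p + 1 := by
    simp only [hmdef, hFq, hsymq, min_self]
  have hmleF : ∀ x, m x ≤ F x := fun x => min_le_left _ _
  have hmleFs : ∀ x, m x ≤ F.symm x + 1 := fun x => min_le_right _ _
  -- the bump
  set κ : ℝ := 1/(2*(q - p)) with hκdef
  have h0qp : (0:ℝ) < q - p := by linarith
  have hκ0 : 0 < κ := by
    rw [hκdef]
    apply div_pos one_pos
    linarith
  have hκ1 : κ * (q - p) ≤ 1/2 := by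
    rw [hκdef, div_mul_eq_mul_div, one_mul, div_le_iff₀ (show (0:ℝ) < 2*(q-p) by linarith)]
    linarith
  obtain ⟨hφm, hφmaps, hφp, hφq, hφlt, _⟩ := bump_facts p q κ hpq hκ0 hκ1
  set φ : ℝ → ℝ := fun x => x - κ*(x-p)*(q-x) with hφdef
  have hφp' : φ p = p := hφp
  have hφq' : φ q = q := hφq
  set θ : ℝ → ℝ := fun x => m (φ x) with hθdef
  have hθm : StrictMonoOn θ (Icc p q) := by
    intro x hx y hy hxy
    exact hmmono (hφm hx hy hxy)
  have hθp : θ p = q := by simp only [hθdef, hφp', hmp]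
  have hθq : θ q = p + 1 := by simp only [hθdef, hφq', hmq]
  have hmc : Continuous m := by
    apply Continuous.min F.continuous
    exact (F.symm.continuous).add continuous_const
  have hφc : Continuous φ := by simp only [hφdef]; fun_prop
  have hθc : ContinuousOn θ (Icc p q) := (hmc.comp hφc).continuousOn
  have hθsurj : SurjOn θ (Icc p q) (Icc q (p+1)) := by
    have := intermediate_value_Icc hpq.le hθc
    rw [hθp, hθq] at this
    exact this
  obtain ⟨Sg, hSg1, hSg2, hSgθ⟩ := glue_invol p q hpq hq1 θ hθm hθsurj hθp hθq
  -- key comparison: Sg < m ≤ F, F.symm + 1 on the interior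
  have hlt : ∀ x, p < x → x < q → Sg x < m x := by
    intro x h1 h2
    rw [hSgθ x ⟨h1.le, h2.le⟩]
    exact hmmono (hφlt x ⟨h1, h2⟩)
  refine assemble F Sg hF1 hSg1 hSg2 p q hpq hq1 ?_ ?_ ?_ ?_
  · rw [hFp, hSgθ q ⟨hpq.le, le_refl q⟩, hθq]
  · rw [hFq]
    have h2 := hSg1.map_int 1 p
    push_cast at h2
    rw [h2, hSgθ p ⟨le_refl p, hpq.le⟩, hθp]
  · intro x h1 h2
    have key : Sg x < F x := lt_of_lt_of_le (hlt x h1 h2) (hmleF x)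
    have h5 := Sg.strictMono key
    rw [hSg2 x] at h5
    exact_mod_cast h5
  · intro x h1 h2
    -- second half: use the mirror point
    have hxmem : x ∈ Icc q (p+1) := ⟨h1.le, h2.le⟩
    obtain ⟨w, hw, hθw⟩ := hθsurj hxmem
    have hwI : w ∈ Ioo p q := by
      constructor
      · rcases eq_or_lt_of_le hw.1 with h | h
        · exfalso; rw [← h, hθp] at hθw; rw [← hθw] at h1; exact lt_irrefl _ h1
        · exact h
      · rcases eq_or_lt_of_le hw.2 with h | h
        · exfalso; rw [h, hθq] at hθw; rw [← hθw] at h2; exact lt_irrefl _ h2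
        · exact h
    have hSgx : Sg x = w + 1 := by
      rw [← hθw, ← hSgθ w ⟨hwI.1.le, hwI.2.le⟩, hSg2 w]
      norm_num
    have hkey : F x < Sg x := by
      rw [hSgx]
      -- F x < w + 1  ⟺  x < F.symm w + 1
      have h3 : θ w < F.symm w + 1 :=
        lt_of_lt_of_le (by rw [← hSgθ w ⟨hwI.1.le, hwI.2.le⟩]; exact hlt w hwI.1 hwI.2)
          (hmleFs w)
      rw [hθw] at h3
      -- h3 : x < F.symm w + 1
      have h4 := F.strictMono h3
      have h5 := hF1.map_int 1 (F.symm w)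
      push_cast at h5
      rw [h5, F.apply_symm_apply] at h4
      linarith
    have h6 := Sg.strictMono hkey
    rw [hSg2 x] at h6
    exact_mod_cast h6

/-- Case E: construction at a point `a` with `a < F a < a+1` and `F² < T₁` on `[a, F a]`. -/
theorem caseE (F : ℝ ≃o ℝ) (hF1 : LiftIso F) (a : ℝ) (h1 : a < F a) (h2 : F a < a + 1)
    (he : ∀ x ∈ Icc a (F a), F (F x) < x + 1) : RealTriple F := by
  have hsFa : F.symm (F a) = a := F.symm_apply_apply a
  have hsym1 : ∀ x, F.symm (x + 1) = F.symm x + 1 := by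
    intro x
    have := (hF1.symm).map_int 1 x
    push_cast at this
    exact this
  have hF1' : ∀ x, F (x + 1) = F x + 1 := fun x => hF1 x
  have hLU' : ∀ x ∈ Icc a (F a), F x < F.symm x + 1 := by
    intro x hx
    have h3 := he x hx
    have h4 := F.symm.strictMono h3
    rw [F.symm_apply_apply, hsym1] at h4
    exact h4
  set b : ℝ := (a + F a)/2 with hbdef
  have hb1 : a < b := by simp only [hbdef]; linarith
  have hb2 : b < F a := by simp only [hbdef]; linarith
  have hba1 : b < a + 1 := by linarith
  -- piece 1 : bump below the identity on [a,b]
  have h0ba : (0:ℝ) < b - a := by linarith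
  set κ₁ : ℝ := 1/(2*(b - a)) with hκdef
  have hκ0 : 0 < κ₁ := by rw [hκdef]; apply div_pos one_pos; linarith
  have hκ1 : κ₁ * (b - a) ≤ 1/2 := by
    rw [hκdef, div_mul_eq_mul_div, one_mul, div_le_iff₀ (show (0:ℝ) < 2*(b-a) by linarith)]
    linarith
  obtain ⟨hφm, hφmaps, hφa, hφb, hφlt, _⟩ := bump_facts a b κ₁ hb1 hκ0 hκ1
  set φ₁ : ℝ → ℝ := fun x => x - κ₁*(x-a)*(b-x) with hφdef
  have hφc : Continuous φ₁ := by simp only [hφdef]; fun_prop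
  -- piece 2 : corridor on [b, F a] between F and F.symm + 1
  obtain ⟨θc, hθcc, hθcm, hθcb, hθct, hθcin⟩ :=
    corridor b (F a) hb2 (⇑F) (fun x => F.symm x + 1)
      F.continuous.continuousOn ((F.symm.continuous.add continuous_const).continuousOn)
      (fun x _ y _ h => F.strictMono h)
      (fun x _ y _ h => by simpa using F.symm.strictMono h)
      (fun x hx => hLU' x ⟨le_trans hb1.le hx.1, hx.2⟩)
      (F b) (a + 1)
      ⟨le_refl _, (hLU' b ⟨hb1.le, hb2.le⟩).le⟩
      ⟨(he a ⟨le_refl _, h1.le⟩).le, by rw [hsFa]⟩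
      (by
        have := F.strictMono (lt_of_lt_of_le hb2 (le_refl (F a)))
        have h3 := he a ⟨le_refl _, h1.le⟩
        linarith)
  -- the glued boundary function θ
  set θ : ℝ → ℝ := fun x => if x ≤ b then F (φ₁ x) else θc x with hθdef
  have hθa : θ a = F a := by
    simp only [hθdef, if_pos hb1.le]
    rw [show φ₁ a = a from hφa]
  have hθb : θ b = F b := by
    simp only [hθdef, if_pos (le_refl b)]
    rw [show φ₁ b = b from hφb]
  have hθFa : θ (F a) = a + 1 := by
    simp only [hθdef, if_neg (not_le_of_gt hb2)]
    exact hθct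
  have hθeq2 : ∀ x, b < x → θ x = θc x := by
    intro x hx; simp only [hθdef, if_neg (not_le_of_gt hx)]
  have hθm : StrictMonoOn θ (Icc a (F a)) := by
    intro x hx y hy hxy
    by_cases hxb : x ≤ b
    · by_cases hyb : y ≤ b
      · simp only [hθdef, if_pos hxb, if_pos hyb]
        exact F.strictMono (hφm ⟨hx.1, hxb⟩ ⟨le_trans hx.1 hxy.le, hyb⟩ hxy)
      · push_neg at hyb
        simp only [hθdef, if_pos hxb, if_neg (not_le_of_gt hyb)]
        have hA : F (φ₁ x) ≤ F b := by
          apply F.strictMono.monotone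
          have := hφmaps x ⟨hx.1, hxb⟩
          exact this.2
        have hB : θc b < θc y := hθcm ⟨le_refl _, hb2.le⟩ ⟨hyb.le, hy.2⟩ hyb
        rw [← hθcb] at hA
        linarith
    · push_neg at hxb
      have hyb : ¬ y ≤ b := by push_neg; linarith
      simp only [hθdef, if_neg (not_le_of_gt hxb), if_neg hyb]
      push_neg at hyb
      exact hθcm ⟨hxb.le, hx.2⟩ ⟨hyb.le, hy.2⟩ hxy
  have hθsurj : SurjOn θ (Icc a (F a)) (Icc (F a) (a+1)) := by
    intro y hy
    by_cases hyF : y ≤ F b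
    · have hc : ContinuousOn (fun x => F (φ₁ x)) (Icc a b) :=
        F.continuous.comp_continuousOn hφc.continuousOn
      have him := intermediate_value_Icc hb1.le hc
      rw [show φ₁ a = a from hφa, show φ₁ b = b from hφb] at him
      obtain ⟨x, hx, hFx⟩ := him ⟨hy.1, hyF⟩
      refine ⟨x, ⟨hx.1, le_trans hx.2 hb2.le⟩, ?_⟩
      simp only [hθdef, if_pos hx.2]
      exact hFx
    · push_neg at hyF
      have him := intermediate_value_Icc hb2.le hθcc
      rw [hθcb, hθct] at him
      obtain ⟨x, hx, hFx⟩ := him ⟨hyF.le, hy.2⟩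
      refine ⟨x, ⟨le_trans hb1.le hx.1, hx.2⟩, ?_⟩
      by_cases hxb : x ≤ b
      · have : x = b := le_antisymm hxb hx.1
        rw [this] at hFx ⊢
        rw [hθb, ← hθcb]
        exact hFx
      · push_neg at hxb
        rw [hθeq2 x hxb]
        exact hFx
  obtain ⟨Sg, hSg1, hSg2, hSgθ⟩ := glue_invol a (F a) h1 h2 θ hθm hθsurj hθa hθFa
  -- sign information
  have key1 : ∀ x, a < x → x < b → Sg x < F x := by
    intro x hx1 hx2
    rw [hSgθ x ⟨hx1.le, le_trans hx2.le hb2.le⟩]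
    simp only [hθdef, if_pos hx2.le]
    exact F.strictMono (hφlt x ⟨hx1, hx2⟩)
  have key2 : ∀ x, b < x → x < a + 1 → F x < Sg x := by
    intro x hx1 hx2
    rcases lt_trichotomy x (F a) with hc | hc | hc
    · -- x ∈ (b, F a) : corridor lower bound
      rw [hSgθ x ⟨le_trans hb1.le hx1.le, hc.le⟩, hθeq2 x hx1]
      exact (hθcin x ⟨hx1, hc⟩).1
    · -- x = F a
      rw [hc, hSgθ (F a) ⟨h1.le, le_refl _⟩, hθFa]
      exact he a ⟨le_refl _, h1.le⟩
    · -- x ∈ (F a, a+1) : mirror point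
      obtain ⟨w, hw, hθw⟩ := hθsurj (⟨hc.le, hx2.le⟩ : x ∈ Icc (F a) (a+1))
      have hwI : w ∈ Ioo a (F a) := by
        constructor
        · rcases eq_or_lt_of_le hw.1 with h | h
          · exfalso; rw [← h, hθa] at hθw; rw [← hθw] at hc; exact lt_irrefl _ hc
          · exact h
        · rcases eq_or_lt_of_le hw.2 with h | h
          · exfalso; rw [h, hθFa] at hθw; rw [← hθw] at hx2; exact lt_irrefl _ hx2
          · exact h
      have hSgx : Sg x = w + 1 := by
        rw [← hθw, ← hSgθ w ⟨hwI.1.le, hwI.2.le⟩, hSg2 w]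
        norm_num
      have hθwlt : θ w < F.symm w + 1 := by
        by_cases hwb : w ≤ b
        · simp only [hθdef, if_pos hwb]
          have hφle : φ₁ w ≤ w := by
            simp only [hφdef]
            nlinarith [mul_nonneg (mul_nonneg hκ0.le
              (sub_nonneg.mpr (show a ≤ w from hwI.1.le))) (sub_nonneg.mpr hwb)]
          calc F (φ₁ w) ≤ F w := F.strictMono.monotone hφle
          _ < F.symm w + 1 := hLU' w ⟨hwI.1.le, hwI.2.le⟩
        · push_neg at hwb
          rw [hθeq2 w hwb]
          exact (hθcin w ⟨hwb, hwI.2⟩).2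
      rw [hSgx, hθw] at *
      -- hθwlt : x < F.symm w + 1
      have h4 := F.strictMono hθwlt
      rw [hF1' (F.symm w), F.apply_symm_apply] at h4
      exact h4
  refine assemble F Sg hF1 hSg1 hSg2 a b hb1 hba1 ?_ ?_ ?_ ?_
  · rw [hSgθ (F a) ⟨h1.le, le_refl _⟩, hθFa]
  · rw [show F b = θ b from hθb.symm, ← hSgθ b ⟨hb1.le, hb2.le⟩, hSg2 b]
    norm_num
  · intro x hx1 hx2
    have h5 := Sg.strictMono (key1 x hx1 hx2)
    rw [hSg2 x] at h5
    exact_mod_cast h5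
  · intro x hx1 hx2
    have h6 := Sg.strictMono (key2 x hx1 hx2)
    rw [hSg2 x] at h6
    exact_mod_cast h6

/-- Conjugation by `x ↦ -x`. -/
def negConj (S : ℝ ≃o ℝ) : ℝ ≃o ℝ :=
  StrictMono.orderIsoOfSurjective (fun x => -S (-x))
    (fun x y h => by
      simp only [neg_lt_neg_iff]
      exact S.strictMono (by linarith))
    (fun y => ⟨-S.symm (-y), by simp⟩)

theorem negConj_apply (S : ℝ ≃o ℝ) (x : ℝ) : negConj S x = -S (-x) := by
  rfl

theorem negConj_lift {S : ℝ ≃o ℝ} (hS : LiftIso S) : LiftIso (negConj S) := by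
  intro x
  rw [negConj_apply, negConj_apply]
  have h := hS.map_int (-1) (-x)
  push_cast at h
  rw [show -(x+1) = -x + -1 by ring, h]
  ring

theorem nu_transfer (F G : ℝ ≃o ℝ) (c : ℤ) (hG : ∀ x, G x = -F (-x) + c)
    (h : RealTriple G) : RealTriple F := by
  obtain ⟨S₁, S₂, S₃, k₁, k₂, k₃, m, h₁l, h₁i, h₂l, h₂i, h₃l, h₃i, hp⟩ := h
  refine ⟨negConj S₁, negConj S₂, negConj S₃, -k₁, -k₂, -k₃, -c - m,
    negConj_lift h₁l, ?_, negConj_lift h₂l, ?_, negConj_lift h₃l, ?_, ?_⟩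
  · intro x
    rw [negConj_apply, negConj_apply, neg_neg, h₁i (-x)]
    push_cast; ring
  · intro x
    rw [negConj_apply, negConj_apply, neg_neg, h₂i (-x)]
    push_cast; ring
  · intro x
    rw [negConj_apply, negConj_apply, neg_neg, h₃i (-x)]
    push_cast; ring
  · intro x
    rw [negConj_apply, negConj_apply, negConj_apply, neg_neg, neg_neg, hp (-x), hG (-x),
      neg_neg]
    push_cast; ring

theorem shift_transfer (F F' : ℝ ≃o ℝ) (c : ℤ) (hc : ∀ x, F' x = F x + c)
    (h : RealTriple F') : RealTriple F := by
  obtain ⟨S₁, S₂, S₃, k₁, k₂, k₃, m, h₁l, h₁i, h₂l, h₂i, h₃l, h₃i, hp⟩ := h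
  exact ⟨S₁, S₂, S₃, k₁, k₂, k₃, c + m, h₁l, h₁i, h₂l, h₂i, h₃l, h₃i, fun x => by
    rw [hp x, hc x]; push_cast; ring⟩

/-- A continuous function avoiding a value cannot change side. -/
theorem no_crossing (g : ℝ → ℝ) (hg : Continuous g) (v : ℝ) (havoid : ∀ x, g x ≠ v)
    (x y : ℝ) (hx : v < g x) : v < g y := by
  by_contra h
  push_neg at h
  have h' : g y < v := lt_of_le_of_ne h (havoid y)
  have := intermediate_value_uIcc (a := y) (b := x) (f := g) hg.continuousOn
  have hv : v ∈ uIcc (g y) (g x) := by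
    rw [Set.mem_uIcc]; left; exact ⟨h'.le, hx.le⟩
  obtain ⟨z, _, hz⟩ := this hv
  exact havoid z hz

theorem no_crossing' (g : ℝ → ℝ) (hg : Continuous g) (v : ℝ) (havoid : ∀ x, g x ≠ v)
    (x y : ℝ) (hx : g x < v) : g y < v := by
  by_contra h
  push_neg at h
  have h' : v < g y := lt_of_le_of_ne h (fun hh => havoid y hh.symm)
  have := no_crossing g hg v havoid y x h'
  linarith

theorem addRight_apply (c x : ℝ) : (OrderIso.addRight c) x = x + c := rfl

theorem real_main (F : ℝ ≃o ℝ) (hF1 : LiftIso F) : RealTriple F := by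
  by_cases hA : ∃ k : ℤ, ∀ x, F (F x) = x + k
  · obtain ⟨k, hk⟩ := hA
    exact caseA F hF1 k hk
  by_cases hB : ∃ p : ℝ, (∃ k : ℤ, F (F p) = p + k) ∧ ∀ j : ℤ, F p ≠ p + j
  · -- Case B: a genuine period-two point
    obtain ⟨p, ⟨k2, hk2⟩, hk1⟩ := hB
    set n : ℤ := ⌊F p - p⌋ with hn
    set F' : ℝ ≃o ℝ := F.trans (OrderIso.addRight (-(n:ℝ))) with hF'
    have hF'app : ∀ x, F' x = F x - n := by
      intro x
      simp only [hF', OrderIso.trans_apply, addRight_apply]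
      ring
    have hF'1 : LiftIso F' := by
      intro x; rw [hF'app, hF'app, hF1 x]; ring
    set q : ℝ := F p - n with hq
    have hF'p : F' p = q := hF'app p
    have hfr : q - p = Int.fract (F p - p) := by
      simp only [hq, hn, Int.fract]
      have : ⌊F p - p⌋ = n := by rw [hn]
      rw [this]; ring
    have hq1 : p < q := by
      have h0 : 0 ≤ q - p := by rw [hfr]; exact Int.fract_nonneg _
      rcases eq_or_lt_of_le h0 with h | h
      · exfalso
        have : F p = p + n := by
          have h2 : q = p := by linarith
          simp only [hq] at h2
          linarith
        exact hk1 n this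
      · linarith
    have hq2 : q < p + 1 := by
      have := Int.fract_lt_one (F p - p)
      rw [← hfr] at this
      linarith
    have hF'q : F' q = p + 1 := by
      have hval : F' q = F (F p) - 2*n := by
        rw [hF'app, hq]
        have := hF1.map_int (-n) (F p)
        push_cast at this
        rw [show F p - (n:ℝ) = F p + -(n:ℝ) by ring, this]
        ring
      have hval2 : F' q = p + (k2 - 2*n) := by
        rw [hval, hk2]; push_cast; ring
      have hlow : q < F' q := by
        rw [← hF'p]
        exact F'.strictMono hq1
      have hhigh : F' q < q + 1 := by
        have h3 : F' (p + 1) = F' p + 1 := hF'1 p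
        have := F'.strictMono hq2
        rw [h3, hF'p] at this
        exact this
      have hcast : ((k2 - 2*n:ℤ):ℝ) = (k2:ℝ) - 2*(n:ℝ) := by push_cast; ring
      have hr1 : (0:ℝ) < ((k2 - 2*n:ℤ):ℝ) := by
        rw [hcast]
        have hv2 := hval2
        linarith [hlow, hq1]
      have hr2 : ((k2 - 2*n:ℤ):ℝ) < 2 := by
        rw [hcast]
        have hv2 := hval2
        linarith [hhigh, hq2]
      have hj : k2 - 2*n = 1 := by
        have h1' : 0 < k2 - 2*n := by exact_mod_cast hr1
        have h2' : k2 - 2*n < 2 := by exact_mod_cast hr2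
        omega
      have hjr : (k2:ℝ) - 2*(n:ℝ) = 1 := by
        rw [← hcast]
        exact_mod_cast congrArg (fun z : ℤ => (z:ℝ)) hj
      rw [hval2]
      linarith [hjr]
    have htrip := caseB F' hF'1 p q hq1 hq2 hF'p hF'q
    exact shift_transfer F F' (-n) (fun x => by rw [hF'app]; push_cast; ring) htrip
  push_neg at hB
  by_cases hFix : ∃ (p : ℝ) (k : ℤ), F p = p + k
  · -- fixed point case
    obtain ⟨p, k, hpk⟩ := hFix
    set F₀ : ℝ ≃o ℝ := F.trans (OrderIso.addRight (-(k:ℝ))) with hF₀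
    have hF₀app : ∀ x, F₀ x = F x - k := by
      intro x; simp only [hF₀, OrderIso.trans_apply, addRight_apply]; ring
    have hF₀1 : LiftIso F₀ := by
      intro x; rw [hF₀app, hF₀app, hF1 x]; ring
    have hF₀p : F₀ p = p := by rw [hF₀app, hpk]; ring
    have hF₀p1 : F₀ (p+1) = p+1 := by rw [hF₀1 p, hF₀p]
    have hshift : ∀ x, F₀ x = F x + (-k:ℤ) := fun x => by rw [hF₀app]; push_cast; ring
    -- find a point with non-integer displacement
    have hx₁ : ∃ x, ∀ j : ℤ, F₀ x ≠ x + j := by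
      by_contra h
      push_neg at h
      apply hA
      have hconst : ∀ x, F₀ x = x := by
        -- continuous integer-valued displacement is constant
        have hcont : Continuous (fun y => F₀ y - y) := F₀.continuous.sub continuous_id
        have havoid : ∀ y, (fun y => F₀ y - y) y ≠ 1/2 := by
          intro y
          obtain ⟨j, hj⟩ := h y
          simp only
          rw [hj]
          push_cast
          intro hcon
          have hj2 : (j:ℝ) = 1/2 := by linarith
          rcases le_or_gt j 0 with hj0 | hj0
          · have : (j:ℝ) ≤ 0 := by exact_mod_cast hj0
            linarith
          · have : (1:ℝ) ≤ (j:ℝ) := by exact_mod_cast hj0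
            linarith
        -- at p the displacement is 0 < 1/2 ; so everywhere < 1/2
        have hlt : ∀ y, F₀ y - y < 1/2 := by
          intro y
          apply no_crossing' _ hcont (1/2) havoid p y
          rw [hF₀p]; norm_num
        -- similarly > -1/2
        have havoid' : ∀ y, (fun y => F₀ y - y) y ≠ -(1/2) := by
          intro y
          obtain ⟨j, hj⟩ := h y
          simp only
          rw [hj]
          push_cast
          intro hcon
          have hj2 : (j:ℝ) = -(1/2) := by linarith
          rcases le_or_gt j (-1) with hj0 | hj0
          · have : (j:ℝ) ≤ -1 := by exact_mod_cast hj0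
            linarith
          · have : (0:ℝ) ≤ (j:ℝ) := by
              have : 0 ≤ j := by omega
              exact_mod_cast this
            linarith
        have hgt : ∀ y, -(1/2) < F₀ y - y := by
          intro y
          have := no_crossing _ hcont (-(1/2)) (fun z h' => havoid' z h') p y
            (by show -(1/2:ℝ) < F₀ p - p; rw [hF₀p]; norm_num)
          exact this
        intro x
        obtain ⟨j, hj⟩ := h x
        have h1 := hlt x
        have h2 := hgt x
        rw [hj] at h1 h2
        have hj0 : j = 0 := by
          have ha : (j:ℝ) < 1/2 := by linarith
          have hb : -(1/2) < (j:ℝ) := by linarith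
          have ha' : j ≤ 0 := by
            by_contra hco
            push_neg at hco
            have : (1:ℝ) ≤ (j:ℝ) := by exact_mod_cast hco
            linarith
          have hb' : 0 ≤ j := by
            by_contra hco
            push_neg at hco
            have : (j:ℝ) ≤ -1 := by
              have : j ≤ -1 := by omega
              exact_mod_cast this
            linarith
          omega
        rw [hj0] at hj
        push_cast at hj
        linarith
      refine ⟨2*k, fun x => ?_⟩
      have hFx : F x = x + k := by
        have := hconst x
        rw [hF₀app] at this
        linarith
      rw [hFx, hF1.map_int k x, hFx]
      push_cast; ring
    obtain ⟨x₁, hx₁ne⟩ := hx₁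
    set a : ℝ := x₁ - ⌊x₁ - p⌋ with hadef
    have hF₀a_rel : F₀ a - a = F₀ x₁ - x₁ := by
      have := hF₀1.map_int (-⌊x₁ - p⌋) x₁
      push_cast at this
      rw [hadef]
      rw [show x₁ - (⌊x₁ - p⌋:ℝ) = x₁ + -(⌊x₁ - p⌋:ℝ) by ring, this]
      ring
    have hane : ∀ j : ℤ, F₀ a ≠ a + j := by
      intro j hcon
      apply hx₁ne j
      have : F₀ x₁ - x₁ = j := by rw [← hF₀a_rel, hcon]; ring
      linarith
    have hap : p < a := by
      rcases lt_trichotomy p a with h | h | h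
      · exact h
      · exfalso
        apply hane 0
        rw [← h, hF₀p]
        norm_num
      · exfalso
        have : p ≤ x₁ - ⌊x₁ - p⌋ := by
          have := Int.floor_le (x₁ - p)
          linarith
        rw [hadef] at h
        linarith
    have hap1 : a < p + 1 := by
      rw [hadef]
      have := Int.lt_floor_add_one (x₁ - p)
      linarith
    have hrange : ∀ x, p < x → x < p + 1 → p < F₀ x ∧ F₀ x < p + 1 := by
      intro x h1 h2
      constructor
      · rw [← hF₀p]; exact F₀.strictMono h1
      · rw [← hF₀p1]; exact F₀.strictMono h2
    by_cases hdir : a < F₀ a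
    · have hFa1 : F₀ a < a + 1 := by
        have := (hrange a hap hap1).2
        linarith
      have he : ∀ x ∈ Icc a (F₀ a), F₀ (F₀ x) < x + 1 := by
        intro x hx
        have hx1 : p < x := lt_of_lt_of_le hap hx.1
        have hx2 : x < p + 1 := lt_of_le_of_lt hx.2 (hrange a hap hap1).2
        have h3 := hrange x hx1 hx2
        have h4 := (hrange (F₀ x) h3.1 h3.2).2
        linarith
      exact shift_transfer F F₀ (-k) hshift (caseE F₀ hF₀1 a hdir hFa1 he)
    · push_neg at hdir
      have hdir' : F₀ a < a := lt_of_le_of_ne hdir (by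
        intro hcon
        apply hane 0
        rw [hcon]; norm_num)
      set G : ℝ ≃o ℝ := negConj F₀ with hGdef
      have hGapp : ∀ x, G x = -F₀ (-x) := fun x => negConj_apply F₀ x
      have hG1 : LiftIso G := negConj_lift hF₀1
      have h1' : -a < G (-a) := by rw [hGapp, neg_neg]; linarith
      have h2' : G (-a) < -a + 1 := by
        rw [hGapp, neg_neg]
        have := (hrange a hap hap1).1
        linarith
      have he' : ∀ x ∈ Icc (-a) (G (-a)), G (G x) < x + 1 := by
        intro x hx
        rw [hGapp] at hx
        rw [neg_neg] at hx
        have hxx : -x ∈ Icc (F₀ a) a := by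
          constructor <;> [linarith [hx.2]; linarith [hx.1]]
        have hx1 : p < -x := lt_of_lt_of_le (hrange a hap hap1).1 hxx.1
        have hx2 : -x < p + 1 := lt_of_le_of_lt hxx.2 hap1
        have h3 := hrange (-x) hx1 hx2
        have h4 := hrange (F₀ (-x)) h3.1 h3.2
        rw [hGapp, hGapp, neg_neg]
        linarith [h4.1]
      have htrip := caseE G hG1 (-a) h1' h2' he'
      exact shift_transfer F F₀ (-k) hshift (nu_transfer F₀ G 0
        (fun x => by rw [hGapp]; push_cast; ring) htrip)
  · -- fixed point free case
    push_neg at hFix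
    have hno2 : ∀ x (j : ℤ), F (F x) ≠ x + j := by
      intro x j hcontra
      obtain ⟨j', hj'⟩ := hB x ⟨j, hcontra⟩
      exact hFix x j' hj'
    set d : ℝ → ℝ := fun x => F x - x with hddef
    have hdc : Continuous d := F.continuous.sub continuous_id
    set n : ℤ := ⌊d 0⌋ with hn
    have hd0 : (n:ℝ) < d 0 ∧ d 0 < n + 1 := by
      constructor
      · rcases lt_or_eq_of_le (Int.floor_le (d 0)) with h | h
        · rw [hn]; exact h
        · exfalso; exact hFix 0 n (by simp only [hddef] at h; rw [hn] at *; linarith [h])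
      · rw [hn]; exact Int.lt_floor_add_one (d 0)
    have hband : ∀ x, (n:ℝ) < d x ∧ d x < n + 1 := by
      intro x
      constructor
      · exact no_crossing d hdc n (fun z h => hFix z n (by simp only [hddef] at h; linarith)) 0 x hd0.1
      · exact no_crossing' d hdc (n+1) (fun z h => hFix z (n+1)
          (by simp only [hddef] at h; push_cast at h ⊢; linarith)) 0 x hd0.2
    set F₀ : ℝ ≃o ℝ := F.trans (OrderIso.addRight (-(n:ℝ))) with hF₀
    have hF₀app : ∀ x, F₀ x = F x - n := by
      intro x; simp only [hF₀, OrderIso.trans_apply, addRight_apply]; ring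
    have hF₀1 : LiftIso F₀ := by
      intro x; rw [hF₀app, hF₀app, hF1 x]; ring
    have hshift : ∀ x, F₀ x = F x + (-n:ℤ) := fun x => by rw [hF₀app]; push_cast; ring
    have hF₀band : ∀ x, x < F₀ x ∧ F₀ x < x + 1 := by
      intro x
      have := hband x
      simp only [hddef] at this
      rw [hF₀app]
      constructor <;> [linarith [this.1]; linarith [this.2]]
    have hF₀2 : ∀ x, F₀ (F₀ x) = F (F x) - 2*n := by
      intro x
      rw [hF₀app, hF₀app]
      have := hF1.map_int (-n) (F x)
      push_cast at this
      rw [show F x - (n:ℝ) = F x + -(n:ℝ) by ring, this]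
      ring
    set e : ℝ → ℝ := fun x => F₀ (F₀ x) - x - 1 with hedef
    have hec : Continuous e := by
      apply Continuous.sub
      apply Continuous.sub
      exact F₀.continuous.comp F₀.continuous
      exact continuous_id
      exact continuous_const
    have heavoid : ∀ x, e x ≠ 0 := by
      intro x hcon
      apply hno2 x (2*n + 1)
      simp only [hedef] at hcon
      rw [hF₀2 x] at hcon
      push_cast
      linarith
    by_cases hsign : e 0 < 0
    · have hneg : ∀ x, e x < 0 := fun x => no_crossing' e hec 0 heavoid 0 x hsign
      have he : ∀ x ∈ Icc 0 (F₀ 0), F₀ (F₀ x) < x + 1 := by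
        intro x _
        have := hneg x
        simp only [hedef] at this
        linarith
      exact shift_transfer F F₀ (-n) hshift
        (caseE F₀ hF₀1 0 (by simpa using (hF₀band 0).1) (by simpa using (hF₀band 0).2) he)
    · push_neg at hsign
      have hpos : ∀ x, 0 < e x := by
        have h0 : 0 < e 0 := lt_of_le_of_ne hsign (fun h => heavoid 0 h.symm)
        exact fun x => no_crossing e hec 0 heavoid 0 x h0
      set G : ℝ ≃o ℝ := (negConj F₀).trans (OrderIso.addRight (1:ℝ)) with hGdef
      have hGapp : ∀ x, G x = -F₀ (-x) + 1 := by
        intro x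
        simp only [hGdef, OrderIso.trans_apply, addRight_apply, negConj_apply]
      have hG1 : LiftIso G := by
        intro x
        rw [hGapp, hGapp]
        have h := hF₀1.map_int (-1) (-x)
        push_cast at h
        rw [show -(x+1) = -x + -1 by ring, h]
        ring
      have hG0a : (0:ℝ) < G 0 := by
        rw [hGapp, neg_zero]
        have := (hF₀band 0).2
        linarith
      have hG0b : G 0 < 0 + 1 := by
        rw [hGapp, neg_zero]
        have := (hF₀band 0).1
        linarith
      have heG : ∀ x ∈ Icc 0 (G 0), G (G x) < x + 1 := by
        intro x _
        rw [hGapp, hGapp]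
        have hmap := hF₀1.map_int (-1) (F₀ (-x))
        push_cast at hmap
        rw [show -(-F₀ (-x) + 1) = F₀ (-x) + -1 by ring, hmap]
        have := hpos (-x)
        simp only [hedef] at this
        linarith
      have htrip := caseE G hG1 0 hG0a hG0b heG
      exact shift_transfer F F₀ (-n) hshift (nu_transfer F₀ G 1
        (fun x => by rw [hGapp]; push_cast; ring) htrip)

-- basic coe lemmas
theorem S1.coe_add_int (t : ℝ) (n : ℤ) : ((t + n : ℝ) : S1) = (t : S1) := by
  apply (QuotientAddGroup.eq_iff_sub_mem).mpr
  rw [show t + (n:ℝ) - t = (n:ℝ) by ring]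
  exact ⟨n, by simp⟩

theorem S1.coe_eq_iff {x y : ℝ} : (x : S1) = (y : S1) ↔ ∃ n : ℤ, x = y + n := by
  constructor
  · intro h
    obtain ⟨n, hn⟩ := (QuotientAddGroup.eq_iff_sub_mem).mp h
    refine ⟨n, ?_⟩
    simp only [zsmul_eq_mul, mul_one] at hn
    linarith [hn]
  · rintro ⟨n, rfl⟩
    exact S1.coe_add_int y n

/-- The circle homeomorphism induced by a lift. -/
def toS1 (Φ : ℝ ≃o ℝ) (hΦ : LiftIso Φ) : S1 ≃ₜ S1 where
  toFun := Quotient.map' Φ (by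
    intro s t hst
    rw [QuotientAddGroup.leftRel_apply] at *
    obtain ⟨n, hn⟩ := hst
    simp only [zsmul_eq_mul, mul_one] at hn
    refine ⟨n, ?_⟩
    simp only [zsmul_eq_mul, mul_one]
    have : t = s + n := by linarith
    rw [this, hΦ.map_int n s]
    ring)
  invFun := Quotient.map' Φ.symm (by
    intro s t hst
    rw [QuotientAddGroup.leftRel_apply] at *
    obtain ⟨n, hn⟩ := hst
    simp only [zsmul_eq_mul, mul_one] at hn
    refine ⟨n, ?_⟩
    simp only [zsmul_eq_mul, mul_one]
    have : t = s + n := by linarith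
    rw [this, (hΦ.symm).map_int n s]
    ring)
  left_inv := by
    intro x
    induction x using QuotientAddGroup.induction_on with
    | H t => simp [Quotient.map'_mk'']
  right_inv := by
    intro x
    induction x using QuotientAddGroup.induction_on with
    | H t => simp [Quotient.map'_mk'']
  continuous_toFun := by
    rw [isQuotientMap_quotient_mk'.continuous_iff]
    have : Continuous fun t : ℝ => ((Φ t : ℝ) : S1) :=
      (AddCircle.continuous_mk' 1).comp Φ.continuous
    convert this using 1
    rfl
  continuous_invFun := by
    rw [isQuotientMap_quotient_mk'.continuous_iff]
    have : Continuous fun t : ℝ => ((Φ.symm t : ℝ) : S1) :=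
      (AddCircle.continuous_mk' 1).comp Φ.symm.continuous
    convert this using 1
    rfl

theorem toS1_apply (Φ : ℝ ≃o ℝ) (hΦ : LiftIso Φ) (t : ℝ) :
    toS1 Φ hΦ (t : S1) = ((Φ t : ℝ) : S1) := rfl

theorem toS1_orientationPreserving (Φ : ℝ ≃o ℝ) (hΦ : LiftIso Φ) :
    OrientationPreserving (toS1 Φ hΦ) :=
  ⟨⟨⟨⇑Φ, Φ.monotone⟩, hΦ⟩, fun x => rfl⟩

theorem toS1_isInvolution (Φ : ℝ ≃o ℝ) (hΦ : LiftIso Φ) (k : ℤ) (hk : IsInvLift Φ k) :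
    IsInvolution (toS1 Φ hΦ) := by
  intro x
  induction x using QuotientAddGroup.induction_on with
  | H t =>
    rw [toS1_apply, toS1_apply, hk t]
    exact S1.coe_add_int t k

/-- upgrade a monotone lift of a homeomorphism to an order isomorphism -/
theorem exists_orderIso_lift (f : S1 ≃ₜ S1) (hf : OrientationPreserving f) :
    ∃ (Φ : ℝ ≃o ℝ), LiftIso Φ ∧ ∀ t : ℝ, f (t : S1) = ((Φ t : ℝ) : S1) := by
  obtain ⟨F, hF⟩ := hf
  have hmono : Monotone ⇑F := F.monotone
  have hsm : StrictMono ⇑F := by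
    intro x y hxy
    rcases lt_or_eq_of_le (hmono hxy.le) with h | h
    · exact h
    · exfalso
      have hxy1 : y - x < 1 := by
        by_contra hc
        push_neg at hc
        have h1 : F (x + 1) ≤ F y := hmono (by linarith)
        rw [F.map_add_one, ← h] at h1
        linarith
      have heq : f (x : S1) = f (y : S1) := by
        rw [hF x, hF y, h]
      have hinj := f.injective heq
      obtain ⟨n, hn⟩ := S1.coe_eq_iff.mp hinj
      have hn0 : n ≠ 0 := by
        intro h0
        rw [h0] at hn
        push_cast at hn
        linarith [hn]
      rcases lt_or_gt_of_ne hn0 with h0 | h0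
      · have hcast : (n:ℝ) ≤ -1 := by exact_mod_cast (show n ≤ -1 by omega)
        linarith [hn]
      · have hcast : (1:ℝ) ≤ (n:ℝ) := by exact_mod_cast h0
        linarith [hn]
  have hsurj : Function.Surjective ⇑F := by
    intro z
    obtain ⟨c, hc⟩ := Quotient.exists_rep (f.symm (z : S1))
    have hc' : f.symm ((z:ℝ) : S1) = (c : S1) := by
      rw [← hc]
    have h1 : f ((c : ℝ) : S1) = ((z:ℝ) : S1) := by
      rw [← hc']
      exact f.apply_symm_apply _
    rw [hF c] at h1
    obtain ⟨n, hn⟩ := S1.coe_eq_iff.mp h1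
    refine ⟨c - n, ?_⟩
    rw [F.map_sub_int]
    linarith [hn]
  refine ⟨StrictMono.orderIsoOfSurjective ⇑F hsm hsurj, ?_, ?_⟩
  · intro x
    rw [StrictMono.coe_orderIsoOfSurjective]
    exact F.map_add_one x
  · intro t
    rw [StrictMono.coe_orderIsoOfSurjective]
    exact hF t


end RealAux

/-- Every orientation preserving circle homeomorphism is a composite of three
orientation preserving involutions. -/
theorem stmt13 (f : S1 ≃ₜ S1) (hf : OrientationPreserving f) :
    ∃ σ₁ σ₂ σ₃ : S1 ≃ₜ S1,
      OrientationPreserving σ₁ ∧ IsInvolution σ₁ ∧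
      OrientationPreserving σ₂ ∧ IsInvolution σ₂ ∧
      OrientationPreserving σ₃ ∧ IsInvolution σ₃ ∧
      ∀ x, f x = σ₁ (σ₂ (σ₃ x)) := by
  obtain ⟨Φ, hΦ1, hΦf⟩ := exists_orderIso_lift f hf
  obtain ⟨S₁, S₂, S₃, k₁, k₂, k₃, m, h₁l, h₁i, h₂l, h₂i, h₃l, h₃i, hp⟩ := real_main Φ hΦ1
  refine ⟨toS1 S₁ h₁l, toS1 S₂ h₂l, toS1 S₃ h₃l,
    toS1_orientationPreserving S₁ h₁l, toS1_isInvolution S₁ h₁l k₁ h₁i,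
    toS1_orientationPreserving S₂ h₂l, toS1_isInvolution S₂ h₂l k₂ h₂i,
    toS1_orientationPreserving S₃ h₃l, toS1_isInvolution S₃ h₃l k₃ h₃i, ?_⟩
  intro x
  induction x using QuotientAddGroup.induction_on with
  | H t =>
    rw [hΦf t, toS1_apply, toS1_apply, toS1_apply, hp t]
    exact (S1.coe_add_int (Φ t) m).symm

end
end
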